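/- arXiv:2505.03954 — 7 statements merged into one kernel-verified Lean document; each statement's English description precedes it below -/
import Mathlib

section
/- Let $s \ge 0$ be an integer, let $F \in \mathbb{R}[x_1,\dots,x_s]$ be a multilinear polynomial with nonnegative coefficients and zero constant coefficient, let $p \in [0,1]$, and let $\beta_1,\dots,\beta_s$ be i.i.d. Bernoulli($p$) random variables. Then for any real $t \ge 0$ and any real $\ell > 3^s t$, $\Pr[|F(\beta_1,\dots,\beta_s) - \ell| \le t] \le \max_{n \in \mathbb{N}} \Pr[X_{n,p} = 1]$, where $X_{n,p}$ denotes a Binomial($n$, $p$) random variable. -/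
/-!
Induction on the number `n` of variables. If every linear coefficient `c {i}` exceeds
`(ℓ + t) / 2`, then `F` can be `t`-close to `ℓ` only when exactly one variable equals `1`:
`F(0) = 0` is too small and any two variables already push `F` beyond `ℓ + t`. That event has
probability `n p (1 - p)^(n - 1)`. Otherwise pick `i` with `c {i} ≤ (ℓ + t) / 2` and condition
on `β_i`. For `β_i = 0` the window is unchanged; for `β_i = 1`, `F = c {i} + F'` with `F'` again
multilinear with nonnegative coefficients and no constant term, and the new target
`ℓ - c {i} ≥ (ℓ - t) / 2` still exceeds `3^(n-1) t`.
-/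

open Finset

/-- `sup_n P[Bin(n, p) = 1]`. -/
noncomputable def binomialOneSup (p : ℝ) : ℝ := ⨆ n : ℕ, (n : ℝ) * p * (1 - p) ^ (n - 1)

section binomialOneSup

variable {p : ℝ}

/-- `n p (1 - p)^(n - 1)` is the `k = 1` term of the expansion of `(p + (1 - p))^n = 1`. -/
lemma natCast_mul_mul_one_sub_pow_le_one (hp0 : 0 ≤ p) (hp1 : p ≤ 1) (n : ℕ) :
    (n : ℝ) * p * (1 - p) ^ (n - 1) ≤ 1 := by
  rcases Nat.eq_zero_or_pos n with rfl | hn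
  · simp
  have hq : 0 ≤ 1 - p := by linarith
  have hsum := add_pow p (1 - p) n
  rw [add_sub_cancel, one_pow] at hsum
  calc (n : ℝ) * p * (1 - p) ^ (n - 1) = p ^ 1 * (1 - p) ^ (n - 1) * (n.choose 1 : ℝ) := by
        rw [Nat.choose_one_right]; ring
    _ ≤ ∑ k ∈ range (n + 1), p ^ k * (1 - p) ^ (n - k) * (n.choose k : ℝ) :=
        single_le_sum (f := fun k => p ^ k * (1 - p) ^ (n - k) * (n.choose k : ℝ))
          (fun k _ => by positivity) (by simp; omega)
    _ = 1 := hsum.symm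

lemma le_binomialOneSup (hp0 : 0 ≤ p) (hp1 : p ≤ 1) (n : ℕ) :
    (n : ℝ) * p * (1 - p) ^ (n - 1) ≤ binomialOneSup p :=
  le_ciSup (f := fun n : ℕ => (n : ℝ) * p * (1 - p) ^ (n - 1))
    ⟨1, by rintro _ ⟨m, rfl⟩; exact natCast_mul_mul_one_sub_pow_le_one hp0 hp1 m⟩ n

end binomialOneSup

section bernoulliProb

variable {ι : Type*} {p : ℝ}

/-- The probability that a random subset of `u`, containing each element independently with
probability `p`, satisfies `P`. -/
noncomputable def bernoulliProb (p : ℝ) (u : Finset ι) (P : Finset ι → Prop)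
    [DecidablePred P] : ℝ :=
  ∑ A ∈ u.powerset with P A, p ^ #A * (1 - p) ^ (#u - #A)

lemma bernoulliProb_mono (hp0 : 0 ≤ p) (hp1 : p ≤ 1) {u : Finset ι} {P Q : Finset ι → Prop}
    [DecidablePred P] [DecidablePred Q] (hPQ : ∀ A ⊆ u, P A → Q A) :
    bernoulliProb p u P ≤ bernoulliProb p u Q := by
  have : 0 ≤ 1 - p := by linarith
  refine sum_le_sum_of_subset_of_nonneg ?_ fun _ _ _ => by positivity
  intro A
  simp only [mem_filter, mem_powerset]
  exact fun ⟨hA, hP⟩ => ⟨hA, hPQ A hA hP⟩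

lemma bernoulliProb_insert [DecidableEq ι] {u : Finset ι} {i : ι} (hi : i ∉ u)
    (P : Finset ι → Prop) [DecidablePred P] :
    bernoulliProb p (insert i u) P =
      (1 - p) * bernoulliProb p u P + p * bernoulliProb p u (fun B => P (insert i B)) := by
  simp only [bernoulliProb, sum_filter, sum_powerset_insert hi, mul_sum, card_insert_of_notMem hi]
  congr 1 <;> refine sum_congr rfl fun B hB => ?_
  · have : #B ≤ #u := card_le_card (mem_powerset.mp hB)
    rw [Nat.sub_add_comm this, pow_succ]
    split_ifs <;> ring
  · have hiB : i ∉ B := fun h => hi (mem_powerset.mp hB h)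
    rw [card_insert_of_notMem hiB, Nat.add_sub_add_right, pow_succ]
    split_ifs <;> ring

lemma bernoulliProb_card_eq_one (u : Finset ι) :
    bernoulliProb p u (fun A => #A = 1) = #u * p * (1 - p) ^ (#u - 1) := by
  rw [bernoulliProb, ← powersetCard_eq_filter, sum_congr rfl fun A hA => by
    rw [(mem_powersetCard.mp hA).2, pow_one], sum_const, card_powersetCard, Nat.choose_one_right,
    nsmul_eq_mul, mul_assoc]

end bernoulliProb

section multilinear

variable {ι : Type*} {c : Finset ι → ℝ}

lemma card_eq_one_of_abs_sum_powerset_sub_le {A : Finset ι} {ℓ t : ℝ} (hc : ∀ S, 0 ≤ c S)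
    (h0 : c ∅ = 0) (htℓ : t < ℓ) (hbig : ∀ i ∈ A, (ℓ + t) / 2 < c {i})
    (hA : |∑ S ∈ A.powerset, c S - ℓ| ≤ t) : #A = 1 := by
  classical
  have hA' := abs_le.mp hA
  rcases Nat.lt_trichotomy #A 1 with hlt | heq | hgt
  · rw [card_eq_zero.mp (Nat.lt_one_iff.mp hlt), powerset_empty, sum_singleton, h0] at hA'
    linarith
  · exact heq
  · obtain ⟨j, hj, k, hk, hjk⟩ := one_lt_card.mp hgt
    have hpair : c {j} + c {k} ≤ ∑ S ∈ A.powerset, c S := by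
      rw [← sum_pair (by simpa using hjk)]
      exact sum_le_sum_of_subset_of_nonneg (by simp [insert_subset_iff, hj, hk])
        fun S _ _ => hc S
    linarith [hbig j hj, hbig k hk]

variable [DecidableEq ι]

/-- The coefficients of `F` with `x_i := 1` substituted, its constant term `c ∅ + c {i}` dropped. -/
def setOneCoeff (c : Finset ι → ℝ) (i : ι) (T : Finset ι) : ℝ :=
  if T = ∅ then 0 else c T + c (insert i T)

lemma setOneCoeff_nonneg (hc : ∀ S, 0 ≤ c S) (i : ι) (T : Finset ι) :
    0 ≤ setOneCoeff c i T := by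
  unfold setOneCoeff
  split_ifs
  exacts [le_rfl, add_nonneg (hc _) (hc _)]

lemma setOneCoeff_empty (c : Finset ι → ℝ) (i : ι) : setOneCoeff c i ∅ = 0 := if_pos rfl

lemma sum_powerset_insert_eq_add_sum_setOneCoeff (h0 : c ∅ = 0) {i : ι} {B : Finset ι}
    (hi : i ∉ B) :
    ∑ S ∈ (insert i B).powerset, c S = c {i} + ∑ T ∈ B.powerset, setOneCoeff c i T := by
  have hempty : ∅ ∈ B.powerset := empty_mem_powerset B
  have hnonempty : ∀ T ∈ B.powerset.erase ∅, c T + c (insert i T) = setOneCoeff c i T :=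
    fun T hT => (if_neg (ne_of_mem_erase hT)).symm
  rw [sum_powerset_insert hi, ← sum_add_distrib, ← add_sum_erase _ _ hempty,
    ← add_sum_erase _ _ hempty, sum_congr rfl hnonempty, setOneCoeff_empty, insert_empty, h0,
    zero_add, zero_add]

end multilinear

lemma three_pow_mul_lt_sub_of_le_half_add {n : ℕ} {t ℓ a : ℝ} (ht : 0 ≤ t)
    (hℓ : 3 ^ (n + 1) * t < ℓ) (ha : a ≤ (ℓ + t) / 2) : 3 ^ n * t < ℓ - a := by
  have : t ≤ 3 ^ n * t := le_mul_of_one_le_left ht (one_le_pow₀ (by norm_num))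
  rw [pow_succ] at hℓ
  linarith

theorem bernoulliProb_abs_sum_powerset_sub_le_le_binomialOneSup {ι : Type*} {p t : ℝ}
    (hp0 : 0 ≤ p) (hp1 : p ≤ 1) (ht : 0 ≤ t) (u : Finset ι) (c : Finset ι → ℝ) (hc : ∀ S, 0 ≤ c S)
    (h0 : c ∅ = 0) (ℓ : ℝ) (hℓ : 3 ^ #u * t < ℓ) :
    bernoulliProb p u (fun A => |∑ S ∈ A.powerset, c S - ℓ| ≤ t) ≤ binomialOneSup p := by
  classical
  induction u using Finset.strongInduction generalizing c ℓ with
  | H u ih =>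
  by_cases hbig : ∀ i ∈ u, (ℓ + t) / 2 < c {i}
  · have htℓ : t < ℓ := (le_mul_of_one_le_left ht (one_le_pow₀ (by norm_num))).trans_lt hℓ
    calc bernoulliProb p u (fun A => |∑ S ∈ A.powerset, c S - ℓ| ≤ t)
        ≤ bernoulliProb p u (fun A => #A = 1) := bernoulliProb_mono hp0 hp1 fun A hA =>
          card_eq_one_of_abs_sum_powerset_sub_le hc h0 htℓ fun i hi => hbig i (hA hi)
      _ = #u * p * (1 - p) ^ (#u - 1) := bernoulliProb_card_eq_one u
      _ ≤ binomialOneSup p := le_binomialOneSup hp0 hp1 #u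
  push Not at hbig
  obtain ⟨i, hi, hsmall⟩ := hbig
  set u' := u.erase i
  have hiu' : i ∉ u' := notMem_erase i u
  have hu' : u' ⊂ u := erase_ssubset hi
  rw [← insert_erase hi, card_insert_of_notMem hiu'] at hℓ
  rw [← insert_erase hi, bernoulliProb_insert hiu']
  have hx0 : bernoulliProb p u' (fun A => |∑ S ∈ A.powerset, c S - ℓ| ≤ t)
      ≤ binomialOneSup p :=
    ih u' hu' c hc h0 ℓ (lt_of_le_of_lt (by gcongr <;> norm_num) hℓ)
  have hx1 : bernoulliProb p u' (fun B => |∑ S ∈ (insert i B).powerset, c S - ℓ| ≤ t)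
      ≤ binomialOneSup p := by
    refine (bernoulliProb_mono hp0 hp1 fun B hB hB' => ?_).trans
      (ih u' hu' (setOneCoeff c i) (setOneCoeff_nonneg hc i) (setOneCoeff_empty c i)
        (ℓ - c {i}) (three_pow_mul_lt_sub_of_le_half_add ht hℓ hsmall))
    rw [sum_powerset_insert_eq_add_sum_setOneCoeff h0 fun h => hiu' (hB h)] at hB'
    convert hB' using 2
    ring
  calc _ ≤ (1 - p) * binomialOneSup p + p * binomialOneSup p := by gcongr
    _ = binomialOneSup p := by ring

section boolFun

variable {α : Type*} [Fintype α]

lemma bijective_filter_eq_true [DecidableEq α] :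
    Function.Bijective fun x : α → Bool => ({i | x i} : Finset α) := by
  refine Function.bijective_iff_has_inverse.mpr
    ⟨fun A i => decide (i ∈ A), fun x => ?_, fun A => ?_⟩
  · funext i; simp
  · ext i; simp

lemma prod_ite_eq_pow_mul_pow (p : ℝ) (x : α → Bool) :
    ∏ i, (if x i then p else 1 - p) =
      p ^ #{i | x i} * (1 - p) ^ (Fintype.card α - #{i | x i}) := by
  rw [prod_ite, prod_const, prod_const, ← card_univ,
    ← card_filter_add_card_filter_not (s := univ) (fun i => x i = true)]
  simp

lemma sum_mul_prod_ite_eq_sum_powerset [DecidableEq α] (c : Finset α → ℝ) (x : α → Bool) :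
    ∑ S, c S * ∏ i ∈ S, (if x i then (1 : ℝ) else 0) =
      ∑ S ∈ ({i | x i} : Finset α).powerset, c S := by
  simp_rw [prod_boole, mul_ite, mul_one, mul_zero, ← sum_filter]
  congr 1
  ext S
  simp [subset_iff]

lemma sum_prod_ite_mul_ite_eq_bernoulliProb [DecidableEq α] (p : ℝ) (P : Finset α → Prop)
    [DecidablePred P] :
    ∑ x : α → Bool, (∏ i, if x i then p else 1 - p) * (if P {i | x i} then 1 else 0) =
      bernoulliProb p univ P := by
  simp_rw [prod_ite_eq_pow_mul_pow, bernoulliProb, powerset_univ, card_univ, sum_filter, mul_ite,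
    mul_one, mul_zero]
  exact Fintype.sum_bijective _ bijective_filter_eq_true _ _ fun _ => rfl

end boolFun

theorem stmt_2 (s : ℕ) (c : Finset (Fin s) → ℝ) (hc : ∀ S, 0 ≤ c S) (h0 : c ∅ = 0)
    (p : ℝ) (hp0 : 0 ≤ p) (hp1 : p ≤ 1) (t ℓ : ℝ) (ht : 0 ≤ t) (hℓ : 3 ^ s * t < ℓ) :
    ∑ x : Fin s → Bool,
      (∏ i, if x i then p else 1 - p) *
        (if |(∑ S : Finset (Fin s), c S * ∏ i ∈ S, (if x i then (1 : ℝ) else 0)) - ℓ| ≤ t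
          then (1 : ℝ) else 0)
      ≤ ⨆ n : ℕ, (n : ℝ) * p * (1 - p) ^ (n - 1) := by
  simp_rw [sum_mul_prod_ite_eq_sum_powerset]
  rw [sum_prod_ite_mul_ite_eq_bernoulliProb p fun A => |∑ S ∈ A.powerset, c S - ℓ| ≤ t]
  exact bernoulliProb_abs_sum_powerset_sub_le_le_binomialOneSup hp0 hp1 ht univ c hc h0 ℓ
    (by simpa using hℓ)
end

section
/- For every $\gamma > 0$ there exists $p_0 > 0$ such that for all $0 < p \le p_0$: if $F \in \mathbb{R}[x_1,\dots,x_s]$ is a multilinear polynomial with nonnegative coefficients and zero constant coefficient, and $\beta_1,\dots,\beta_s$ are i.i.d. Bernoulli($p$) random variables, then for any $t \ge 0$ and any $\ell > 3^s t$, $\Pr[|F(\beta_1,\dots,\beta_s) - \ell| \le t] \le 1/e + \gamma$. -/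
open Finset
open scoped Classical

noncomputable section Stmt3Aux

/-- indicator of a proposition -/
private def chi3 (P : Prop) : ℝ := if P then 1 else 0

private lemma chi3_nonneg (P : Prop) : 0 ≤ chi3 P := by
  unfold chi3; split <;> norm_num

private lemma chi3_le_one (P : Prop) : chi3 P ≤ 1 := by
  unfold chi3; split <;> norm_num

private lemma chi3_mono {P Q : Prop} (h : P → Q) : chi3 P ≤ chi3 Q := by
  unfold chi3; split
  · rw [if_pos (h (by assumption))]
  · exact chi3_nonneg Q

private lemma chi3_eq_zero {P : Prop} (h : ¬ P) : chi3 P = 0 := if_neg h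

private lemma chi3_congr {P Q : Prop} (h : P ↔ Q) : chi3 P = chi3 Q := by
  unfold chi3; exact if_congr h rfl rfl

/-- evaluation of the multilinear polynomial with coefficients `c` -/
private def ev3 {s : ℕ} (c : Finset (Fin s) → ℝ) (x : Fin s → Bool) : ℝ :=
  ∑ S : Finset (Fin s), c S * ∏ i ∈ S, (if x i then (1 : ℝ) else 0)

private lemma ev3_nonneg {s : ℕ} {c : Finset (Fin s) → ℝ} (hc : ∀ S, 0 ≤ c S)
    (x : Fin s → Bool) : 0 ≤ ev3 c x := by
  refine Finset.sum_nonneg fun S _ => mul_nonneg (hc S) (Finset.prod_nonneg fun i _ => ?_)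
  split <;> norm_num

private lemma ev3_mono {s : ℕ} {c c' : Finset (Fin s) → ℝ} (h : ∀ S, c S ≤ c' S)
    (x : Fin s → Bool) : ev3 c x ≤ ev3 c' x := by
  refine Finset.sum_le_sum fun S _ => mul_le_mul_of_nonneg_right (h S)
    (Finset.prod_nonneg fun i _ => ?_)
  split <;> norm_num

end Stmt3Aux

section Stmt3Split

variable {s : ℕ}

private def e3 (Tb : Finset (Fin s) × Bool) : Finset (Fin (s+1)) :=
  if Tb.2 then insert 0 (Tb.1.map (Fin.succEmb s)) else Tb.1.map (Fin.succEmb s)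

private lemma zero_notMem_map (T : Finset (Fin s)) : (0 : Fin (s+1)) ∉ T.map (Fin.succEmb s) := by
  simp only [Finset.mem_map, Fin.succEmb]
  rintro ⟨j, -, hj⟩
  exact Fin.succ_ne_zero j hj

private lemma e3_bij : Function.Bijective (e3 (s := s)) := by
  rw [Fintype.bijective_iff_injective_and_card]
  constructor
  · rintro ⟨T, b⟩ ⟨T', b'⟩ h
    have hb : b = b' := by
      by_contra hbb
      rcases b <;> rcases b' <;> simp_all [e3]
      · exact (zero_notMem_map T) (h ▸ Finset.mem_insert_self 0 _)
      · exact (zero_notMem_map T') (h ▸ Finset.mem_insert_self 0 _)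
    subst hb
    rcases b with _ | _
    · simp only [e3, if_neg Bool.false_ne_true] at h
      exact Prod.ext (Finset.map_injective _ h) rfl
    · simp only [e3, if_pos rfl] at h
      have h2 : T.map (Fin.succEmb s) = T'.map (Fin.succEmb s) := by
        have := congrArg (fun A => Finset.erase A 0) h
        simpa [Finset.erase_insert (zero_notMem_map T),
          Finset.erase_insert (zero_notMem_map T')] using this
      exact Prod.ext (Finset.map_injective _ h2) rfl
  · simp [Fintype.card_finset, pow_succ]

private lemma sum_finset_succ (g : Finset (Fin (s+1)) → ℝ) :
    ∑ S : Finset (Fin (s+1)), g S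
      = ∑ T : Finset (Fin s),
          (g (T.map (Fin.succEmb s)) + g (insert 0 (T.map (Fin.succEmb s)))) := by
  rw [← Fintype.sum_bijective (e3 (s := s)) e3_bij _ g (fun _ => rfl)]
  rw [Fintype.sum_prod_type]
  refine Finset.sum_congr rfl fun T _ => ?_
  rw [Fintype.sum_bool]
  simp [e3, add_comm]

private lemma sum_pi_succ (g : (Fin (s+1) → Bool) → ℝ) :
    ∑ x : Fin (s+1) → Bool, g x
      = (∑ y : Fin s → Bool, g (Fin.cons false y))
        + ∑ y : Fin s → Bool, g (Fin.cons true y) := by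
  have h := Fintype.sum_equiv (Fin.consEquiv (fun _ : Fin (s+1) => Bool))
      (fun p : Bool × (Fin s → Bool) => g (Fin.cons p.1 p.2)) g (fun p => rfl)
  rw [← h, Fintype.sum_prod_type, Fintype.sum_bool, add_comm]

end Stmt3Split

noncomputable section Stmt3Ev

variable {s : ℕ}

private def cH3 (c : Finset (Fin (s+1)) → ℝ) (T : Finset (Fin s)) : ℝ :=
  c (T.map (Fin.succEmb s))

private def cK3 (c : Finset (Fin (s+1)) → ℝ) (T : Finset (Fin s)) : ℝ :=
  if T = ∅ then 0 else c (T.map (Fin.succEmb s)) + c (insert 0 (T.map (Fin.succEmb s)))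

private lemma cH3_nonneg {c : Finset (Fin (s+1)) → ℝ} (hc : ∀ S, 0 ≤ c S) :
    ∀ T, 0 ≤ cH3 c T := fun _ => hc _

private lemma cK3_nonneg {c : Finset (Fin (s+1)) → ℝ} (hc : ∀ S, 0 ≤ c S) :
    ∀ T, 0 ≤ cK3 c T := by
  intro T; unfold cK3
  by_cases h : T = ∅
  · rw [if_pos h]
  · rw [if_neg h]; exact add_nonneg (hc _) (hc _)

private lemma cH3_empty {c : Finset (Fin (s+1)) → ℝ} (hc0 : c ∅ = 0) : cH3 c ∅ = 0 := by
  simp [cH3, hc0]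

private lemma cK3_empty (c : Finset (Fin (s+1)) → ℝ) : cK3 c ∅ = 0 := by
  simp [cK3]

private lemma cH3_le_cK3 {c : Finset (Fin (s+1)) → ℝ} (hc : ∀ S, 0 ≤ c S) (hc0 : c ∅ = 0) :
    ∀ T, cH3 c T ≤ cK3 c T := by
  intro T; unfold cH3 cK3
  by_cases h : T = ∅
  · rw [if_pos h, h]; simp [hc0]
  · rw [if_neg h]; exact le_add_of_nonneg_right (hc _)

private lemma ev3_cons_false (c : Finset (Fin (s+1)) → ℝ) (y : Fin s → Bool) :
    ev3 c (Fin.cons false y) = ev3 (cH3 c) y := by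
  unfold ev3
  refine Eq.trans (sum_finset_succ _) ?_
  refine Finset.sum_congr rfl fun T _ => ?_
  rw [Finset.prod_insert (zero_notMem_map T), Finset.prod_map]
  simp [cH3, Fin.succEmb, Fin.cons_zero, Fin.cons_succ]

private lemma ev3_cons_true (c : Finset (Fin (s+1)) → ℝ) (hc0 : c ∅ = 0) (y : Fin s → Bool) :
    ev3 c (Fin.cons true y) = c {0} + ev3 (cK3 c) y := by
  unfold ev3
  refine Eq.trans (sum_finset_succ _) ?_
  rw [← Finset.add_sum_erase _ _ (Finset.mem_univ (∅ : Finset (Fin s)))]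
  conv_rhs => rw [← Finset.add_sum_erase _ _ (Finset.mem_univ (∅ : Finset (Fin s)))]
  have h0 : (c (Finset.map (Fin.succEmb s) (∅ : Finset (Fin s))) * ∏ i ∈ Finset.map (Fin.succEmb s) (∅ : Finset (Fin s)),
        (if (Fin.cons true y : Fin (s+1) → Bool) i then (1:ℝ) else 0))
      + c (insert 0 (Finset.map (Fin.succEmb s) (∅ : Finset (Fin s)))) * ∏ i ∈ insert 0 (Finset.map (Fin.succEmb s) (∅ : Finset (Fin s))),
        (if (Fin.cons true y : Fin (s+1) → Bool) i then (1:ℝ) else 0)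
      = c {0} + cK3 c ∅ * ∏ j ∈ (∅:Finset (Fin s)), (if y j then (1:ℝ) else 0) := by
    simp [hc0, cK3, Fin.cons_zero]
  rw [h0, add_assoc]
  congr 2
  refine Finset.sum_congr rfl fun T hT => ?_
  have hTne : T ≠ ∅ := (Finset.mem_erase.mp hT).1
  rw [Finset.prod_insert (zero_notMem_map T), Finset.prod_map]
  have hcons : ∀ j : Fin s, (if (Fin.cons true y : Fin (s+1) → Bool) ((Fin.succEmb s) j) then (1:ℝ) else 0)
      = (if y j then (1:ℝ) else 0) := by
    intro j; simp [Fin.succEmb, Fin.cons_succ]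
  simp only [cK3, if_neg hTne, Fin.cons_zero, if_pos trivial, hcons]
  ring

end Stmt3Ev

noncomputable section Stmt3Key

private lemma lam_le_R (p lam : ℝ) (hp1 : p < 1) (hlam : 0 ≤ lam) :
    lam ≤ Real.exp ((1-p)*lam) / (Real.exp 1 * (1-p)) := by
  have hp1' : (0:ℝ) < 1 - p := by linarith
  have h := Real.add_one_le_exp ((1-p)*lam - 1)
  have h2 : Real.exp ((1-p)*lam - 1) = Real.exp ((1-p)*lam) / Real.exp 1 := by
    rw [Real.exp_sub]
  rw [h2] at h
  have he : (0:ℝ) < Real.exp 1 := Real.exp_pos 1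
  rw [le_div_iff₀ (mul_pos he hp1')]
  have h4 : (1-p)*lam*Real.exp 1 ≤ Real.exp ((1-p)*lam) :=
    (le_div_iff₀ he).mp (by linarith)
  nlinarith [h4]

private lemma key3 (p : ℝ) (hp0 : 0 < p) (hp1 : p < 1) :
    ∀ (s : ℕ) (c : Finset (Fin s) → ℝ), (∀ S, 0 ≤ c S) → c ∅ = 0 →
    ∀ t ℓ u lam : ℝ, 0 ≤ t → 3 ^ s * t < ℓ → 3*u < 3*ℓ - 2*3^s*t → 0 ≤ lam →
    ∑ x : Fin s → Bool,
        (∏ i, if x i then p else 1 - p) *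
          (chi3 (|ev3 c x - ℓ| ≤ t) + lam * chi3 (ev3 c x ≤ u))
      ≤ Real.exp ((1-p)*lam) / (Real.exp 1 * (1-p)) := by
  have hp1' : (0:ℝ) < 1 - p := by linarith
  intro s
  induction s with
  | zero =>
    intro c hc hc0 t ℓ u lam ht hℓ hu hlam
    have hev : ∀ x : Fin 0 → Bool, ev3 c x = 0 := by
      intro x
      unfold ev3
      have hz : ∀ S : Finset (Fin 0), S ∈ Finset.univ →
          c S * ∏ i ∈ S, (if x i then (1:ℝ) else 0) = 0 := by
        intro S _
        rw [show S = ∅ from Finset.eq_empty_of_isEmpty S, hc0, zero_mul]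
      rw [Finset.sum_congr rfl hz, Finset.sum_const, smul_zero]
    have htℓ : t < ℓ := by simpa using hℓ
    have hℓpos : (0:ℝ) < ℓ := lt_of_le_of_lt ht htℓ
    have hℓ' : ¬ (|(0:ℝ) - ℓ| ≤ t) := by
      rw [zero_sub, abs_neg, abs_of_pos hℓpos]
      exact not_le.mpr htℓ
    calc ∑ x : Fin 0 → Bool,
          (∏ i, if x i then p else 1 - p) *
            (chi3 (|ev3 c x - ℓ| ≤ t) + lam * chi3 (ev3 c x ≤ u))
        = ∑ x : Fin 0 → Bool, lam * chi3 ((0:ℝ) ≤ u) := by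
          refine Finset.sum_congr rfl fun x _ => ?_
          rw [hev x, chi3_eq_zero hℓ', zero_add, Finset.univ_eq_empty, Finset.prod_empty,
            one_mul]
      _ ≤ lam := by
          rw [Finset.sum_const]
          have : (Finset.univ : Finset (Fin 0 → Bool)).card = 1 := by simp
          rw [this, one_smul]
          calc lam * chi3 ((0:ℝ) ≤ u) ≤ lam * 1 :=
                mul_le_mul_of_nonneg_left (chi3_le_one _) hlam
            _ = lam := mul_one lam
      _ ≤ _ := lam_le_R p lam hp1 hlam
  | succ s ih =>
    intro c hc hc0 t ℓ u lam ht hℓ hu hlam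
    have h3s : (0:ℝ) < 3 ^ s := by positivity
    have h3s1 : (1:ℝ) ≤ 3 ^ s := one_le_pow₀ (by norm_num)
    have hpow : (3:ℝ) ^ (s+1) = 3 * 3 ^ s := by rw [pow_succ]; ring
    have hℓ3 : 3 * (3^s * t) < ℓ := by rw [hpow] at hℓ; linarith
    have h4t : t ≤ 3^s * t := by nlinarith
    have hℓs : 3 ^ s * t < ℓ := by nlinarith
    have hu_s : 3*u < 3*ℓ - 2*3^s*t := by rw [hpow] at hu; nlinarith
    have hWy : ∀ y : Fin s → Bool, 0 ≤ ∏ i, (if y i then p else 1 - p) := by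
      intro y
      refine Finset.prod_nonneg fun i _ => ?_
      split <;> linarith
    have hEh : ∀ y, 0 ≤ ev3 (cH3 c) y := fun y => ev3_nonneg (cH3_nonneg hc) y
    have hEk : ∀ y, 0 ≤ ev3 (cK3 c) y := fun y => ev3_nonneg (cK3_nonneg hc) y
    have hHK : ∀ y, ev3 (cH3 c) y ≤ ev3 (cK3 c) y := fun y => ev3_mono (cH3_le_cK3 hc hc0) y
    have ha0 : 0 ≤ c {0} := hc _
    have hWcons : ∀ (b : Bool) (y : Fin s → Bool),
        (∏ i, if (Fin.cons b y : Fin (s+1) → Bool) i then p else 1-p)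
          = (if b then p else 1-p) * ∏ i, (if y i then p else 1-p) := by
      intro b y
      rw [Fin.prod_univ_succ]
      simp [Fin.cons_zero, Fin.cons_succ]
    have e1 : ∀ y : Fin s → Bool,
        (∏ i, if (Fin.cons false y : Fin (s+1) → Bool) i then p else 1 - p) *
          (chi3 (|ev3 c (Fin.cons false y) - ℓ| ≤ t) + lam * chi3 (ev3 c (Fin.cons false y) ≤ u))
        = (1-p) * ((∏ i, (if y i then p else 1-p)) *
            (chi3 (|ev3 (cH3 c) y - ℓ| ≤ t) + lam * chi3 (ev3 (cH3 c) y ≤ u))) := by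
      intro y
      rw [ev3_cons_false, hWcons]
      simp only [Bool.false_eq_true, if_false]
      ring
    have e2 : ∀ y : Fin s → Bool,
        (∏ i, if (Fin.cons true y : Fin (s+1) → Bool) i then p else 1 - p) *
          (chi3 (|ev3 c (Fin.cons true y) - ℓ| ≤ t) + lam * chi3 (ev3 c (Fin.cons true y) ≤ u))
        = p * ((∏ i, (if y i then p else 1-p)) *
            (chi3 (|c {0} + ev3 (cK3 c) y - ℓ| ≤ t)
              + lam * chi3 (c {0} + ev3 (cK3 c) y ≤ u))) := by
      intro y
      rw [ev3_cons_true c hc0, hWcons]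
      simp only [if_true]
      ring
    have hsplit : ∑ x : Fin (s+1) → Bool,
          (∏ i, if x i then p else 1 - p) *
            (chi3 (|ev3 c x - ℓ| ≤ t) + lam * chi3 (ev3 c x ≤ u))
        = (1-p) * (∑ y : Fin s → Bool, (∏ i, (if y i then p else 1-p)) *
            (chi3 (|ev3 (cH3 c) y - ℓ| ≤ t) + lam * chi3 (ev3 (cH3 c) y ≤ u)))
          + p * (∑ y : Fin s → Bool, (∏ i, (if y i then p else 1-p)) *
            (chi3 (|c {0} + ev3 (cK3 c) y - ℓ| ≤ t)
              + lam * chi3 (c {0} + ev3 (cK3 c) y ≤ u))) := by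
      rw [sum_pi_succ]
      rw [Finset.sum_congr rfl (fun y _ => e1 y), Finset.sum_congr rfl (fun y _ => e2 y),
        ← Finset.mul_sum, ← Finset.mul_sum]
    rw [hsplit]
    by_cases hg : 3 ^ s * t < ℓ - c {0}
    · -- good case
      have hQk : (∑ y : Fin s → Bool, (∏ i, (if y i then p else 1-p)) *
            (chi3 (|c {0} + ev3 (cK3 c) y - ℓ| ≤ t)
              + lam * chi3 (c {0} + ev3 (cK3 c) y ≤ u)))
          = ∑ y : Fin s → Bool, (∏ i, (if y i then p else 1-p)) *
            (chi3 (|ev3 (cK3 c) y - (ℓ - c {0})| ≤ t)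
              + lam * chi3 (ev3 (cK3 c) y ≤ u - c {0})) := by
        refine Finset.sum_congr rfl fun y _ => ?_
        congr 1
        congr 1
        · exact chi3_congr (by constructor <;> (intro h; rw [show c {0} + ev3 (cK3 c) y - ℓ
            = ev3 (cK3 c) y - (ℓ - c {0}) from by ring] at * <;> exact h))
        · congr 1
          exact chi3_congr (by constructor <;> (intro h <;> linarith))
      rw [hQk]
      have IH_H := ih (cH3 c) (cH3_nonneg hc) (cH3_empty hc0) t ℓ u lam ht hℓs hu_s hlam
      have IH_K := ih (cK3 c) (cK3_nonneg hc) (cK3_empty c) t (ℓ - c {0}) (u - c {0}) lam ht hg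
        (by linarith) hlam
      nlinarith [IH_H, IH_K]
    · -- bad case
      push_neg at hg
      have h3st : (0:ℝ) ≤ 3^s * t := mul_nonneg h3s.le ht
      have ha2 : 2 * (3^s * t) < c {0} := by linarith
      have hu2 : u < ℓ - 2*(3^s*t) := by rw [hpow] at hu; linarith
      have hua : u < c {0} := by linarith
      set u' := max u (ℓ - c {0} + t) with hu'_def
      set lam' := lam + p/(1-p) with hlam'_def
      have hlam'0 : 0 ≤ lam' := add_nonneg hlam (le_of_lt (div_pos hp0 hp1'))
      have h3u' : 3 * u' < 3*ℓ - 2*3^s*t := by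
        rcases le_total u (ℓ - c {0} + t) with h | h
        · rw [hu'_def, max_eq_right h]; nlinarith
        · rw [hu'_def, max_eq_left h]; exact hu_s
      have hpery : ∀ y : Fin s → Bool,
          (1-p) * ((∏ i, (if y i then p else 1-p)) *
            (chi3 (|ev3 (cH3 c) y - ℓ| ≤ t) + lam * chi3 (ev3 (cH3 c) y ≤ u)))
          + p * ((∏ i, (if y i then p else 1-p)) *
            (chi3 (|c {0} + ev3 (cK3 c) y - ℓ| ≤ t)
              + lam * chi3 (c {0} + ev3 (cK3 c) y ≤ u)))
          ≤ (1-p) * ((∏ i, (if y i then p else 1-p)) *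
            (chi3 (|ev3 (cH3 c) y - ℓ| ≤ t) + lam' * chi3 (ev3 (cH3 c) y ≤ u'))) := by
        intro y
        have h1 : chi3 (c {0} + ev3 (cK3 c) y ≤ u) = 0 := by
          refine chi3_eq_zero ?_
          have := hEk y
          intro hcon
          linarith
        have h2 : chi3 (|c {0} + ev3 (cK3 c) y - ℓ| ≤ t) ≤ chi3 (ev3 (cH3 c) y ≤ u') := by
          refine chi3_mono fun hcon => ?_
          have h2a := (abs_le.mp hcon).2
          have h2b : ev3 (cK3 c) y ≤ ℓ - c {0} + t := by linarith
          have h2c : ev3 (cH3 c) y ≤ ℓ - c {0} + t := le_trans (hHK y) h2b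
          exact le_trans h2c (le_max_right _ _)
        have h3 : chi3 (ev3 (cH3 c) y ≤ u) ≤ chi3 (ev3 (cH3 c) y ≤ u') := by
          refine chi3_mono fun hcon => le_trans hcon (le_max_left _ _)
        have hply : (1-p) * lam' = (1-p) * lam + p := by
          rw [hlam'_def]
          field_simp
        have t1 : (∏ i, (if y i then p else 1-p)) * chi3 (ev3 (cH3 c) y ≤ u)
            ≤ (∏ i, (if y i then p else 1-p)) * chi3 (ev3 (cH3 c) y ≤ u') :=
          mul_le_mul_of_nonneg_left h3 (hWy y)
        have t2 : (∏ i, (if y i then p else 1-p)) * chi3 (|c {0} + ev3 (cK3 c) y - ℓ| ≤ t)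
            ≤ (∏ i, (if y i then p else 1-p)) * chi3 (ev3 (cH3 c) y ≤ u') :=
          mul_le_mul_of_nonneg_left h2 (hWy y)
        have t1' := mul_le_mul_of_nonneg_left t1 (mul_nonneg hp1'.le hlam)
        have t2' := mul_le_mul_of_nonneg_left t2 hp0.le
        rw [h1, mul_zero, add_zero]
        have hexp : (1-p) * ((∏ i, (if y i then p else 1-p)) *
              (chi3 (|ev3 (cH3 c) y - ℓ| ≤ t) + lam' * chi3 (ev3 (cH3 c) y ≤ u')))
            = (1-p) * ((∏ i, (if y i then p else 1-p)) * chi3 (|ev3 (cH3 c) y - ℓ| ≤ t))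
              + ((1-p) * lam) * ((∏ i, (if y i then p else 1-p)) * chi3 (ev3 (cH3 c) y ≤ u'))
              + p * ((∏ i, (if y i then p else 1-p)) * chi3 (ev3 (cH3 c) y ≤ u')) := by
          have h5 : (1-p) * ((∏ i, (if y i then p else 1-p)) *
              (chi3 (|ev3 (cH3 c) y - ℓ| ≤ t) + lam' * chi3 (ev3 (cH3 c) y ≤ u')))
              = (1-p) * ((∏ i, (if y i then p else 1-p)) * chi3 (|ev3 (cH3 c) y - ℓ| ≤ t))
              + ((1-p) * lam') * ((∏ i, (if y i then p else 1-p)) * chi3 (ev3 (cH3 c) y ≤ u')) := by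
            ring
          rw [h5, hply]
          ring
        rw [hexp]
        nlinarith [t1', t2']
      have hsum : (1-p) * (∑ y : Fin s → Bool, (∏ i, (if y i then p else 1-p)) *
            (chi3 (|ev3 (cH3 c) y - ℓ| ≤ t) + lam * chi3 (ev3 (cH3 c) y ≤ u)))
          + p * (∑ y : Fin s → Bool, (∏ i, (if y i then p else 1-p)) *
            (chi3 (|c {0} + ev3 (cK3 c) y - ℓ| ≤ t)
              + lam * chi3 (c {0} + ev3 (cK3 c) y ≤ u)))
          ≤ (1-p) * (∑ y : Fin s → Bool, (∏ i, (if y i then p else 1-p)) *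
            (chi3 (|ev3 (cH3 c) y - ℓ| ≤ t) + lam' * chi3 (ev3 (cH3 c) y ≤ u'))) := by
        rw [Finset.mul_sum, Finset.mul_sum, Finset.mul_sum, ← Finset.sum_add_distrib]
        exact Finset.sum_le_sum fun y _ => hpery y
      have IH_H := ih (cH3 c) (cH3_nonneg hc) (cH3_empty hc0) t ℓ u' lam' ht hℓs h3u' hlam'0
      have hfin : (1-p) * (Real.exp ((1-p)*lam') / (Real.exp 1 * (1-p)))
          ≤ Real.exp ((1-p)*lam) / (Real.exp 1 * (1-p)) := by
        have hply : (1-p) * lam' = (1-p) * lam + p := by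
          rw [hlam'_def]; field_simp
        rw [hply, Real.exp_add]
        have h1p : (1-p) * Real.exp p ≤ 1 := by
          have h := Real.add_one_le_exp (-p)
          rw [Real.exp_neg] at h
          have hep : (0:ℝ) < Real.exp p := Real.exp_pos p
          rw [inv_eq_one_div, le_div_iff₀ hep] at h
          linarith
        have hED : 0 ≤ Real.exp ((1-p)*lam) / (Real.exp 1 * (1-p)) :=
          div_nonneg (Real.exp_pos _).le (mul_pos (Real.exp_pos 1) hp1').le
        calc (1-p) * (Real.exp ((1-p)*lam) * Real.exp p / (Real.exp 1 * (1-p)))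
            = (Real.exp ((1-p)*lam) / (Real.exp 1 * (1-p))) * ((1-p) * Real.exp p) := by ring
          _ ≤ (Real.exp ((1-p)*lam) / (Real.exp 1 * (1-p))) * 1 :=
              mul_le_mul_of_nonneg_left h1p hED
          _ = Real.exp ((1-p)*lam) / (Real.exp 1 * (1-p)) := mul_one _
      calc _ ≤ (1-p) * (∑ y : Fin s → Bool, (∏ i, (if y i then p else 1-p)) *
            (chi3 (|ev3 (cH3 c) y - ℓ| ≤ t) + lam' * chi3 (ev3 (cH3 c) y ≤ u'))) := hsum
        _ ≤ (1-p) * (Real.exp ((1-p)*lam') / (Real.exp 1 * (1-p))) :=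
            mul_le_mul_of_nonneg_left IH_H hp1'.le
        _ ≤ _ := hfin

end Stmt3Key

theorem stmt_3 (γ : ℝ) (hγ : 0 < γ) :
    ∃ p₀ : ℝ, 0 < p₀ ∧ ∀ p : ℝ, 0 < p → p ≤ p₀ →
      ∀ (s : ℕ) (c : Finset (Fin s) → ℝ), (∀ S, 0 ≤ c S) → c ∅ = 0 →
        ∀ t ℓ : ℝ, 0 ≤ t → 3 ^ s * t < ℓ →
          ∑ x : Fin s → Bool,
            (∏ i, if x i then p else 1 - p) *
              (if |(∑ S : Finset (Fin s), c S * ∏ i ∈ S, (if x i then (1 : ℝ) else 0)) - ℓ| ≤ t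
                then (1 : ℝ) else 0)
            ≤ (Real.exp 1)⁻¹ + γ := by
  refine ⟨min γ (1/4), lt_min hγ (by norm_num), ?_⟩
  intro p hp0 hple s c hc hc0 t ℓ ht hℓ
  have hp14 : p ≤ 1/4 := le_trans hple (min_le_right _ _)
  have hpγ : p ≤ γ := le_trans hple (min_le_left _ _)
  have hp1 : p < 1 := by linarith
  have hp1' : (0:ℝ) < 1 - p := by linarith
  have h3st : (0:ℝ) ≤ 3^s * t := mul_nonneg (by positivity) ht
  have hukey : 3*(-1 : ℝ) < 3*ℓ - 2*3^s*t := by nlinarith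
  have key := key3 p hp0 hp1 s c hc hc0 t ℓ (-1) 0 ht hℓ hukey le_rfl
  have heq : ∑ x : Fin s → Bool,
        (∏ i, if x i then p else 1 - p) *
          (if |(∑ S : Finset (Fin s), c S * ∏ i ∈ S, (if x i then (1 : ℝ) else 0)) - ℓ| ≤ t
            then (1 : ℝ) else 0)
      = ∑ x : Fin s → Bool,
          (∏ i, if x i then p else 1 - p) *
            (chi3 (|ev3 c x - ℓ| ≤ t) + (0:ℝ) * chi3 (ev3 c x ≤ -1)) := by
    refine Finset.sum_congr rfl fun x _ => ?_
    rw [zero_mul, add_zero]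
    congr 1
  rw [heq]
  refine le_trans key ?_
  rw [mul_zero, Real.exp_zero]
  have he : (2:ℝ) ≤ Real.exp 1 := by nlinarith [Real.add_one_le_exp 1]
  have h2 : 1 ≤ Real.exp 1 * (1-p) := by nlinarith
  have h3 : γ ≤ γ * (Real.exp 1 * (1-p)) := le_mul_of_one_le_right hγ.le h2
  have h1 : (Real.exp 1)⁻¹ * Real.exp 1 = 1 := inv_mul_cancel₀ (Real.exp_ne_zero 1)
  have h4 : (Real.exp 1)⁻¹ * (Real.exp 1 * (1-p)) = 1-p := by
    rw [← mul_assoc, h1, one_mul]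
  rw [div_le_iff₀ (mul_pos (Real.exp_pos 1) hp1')]
  nlinarith [h3, h4, hpγ]
end

section
/- Let $d, q$ be fixed, let $n \ge k$ be positive integers, and let $\lambda \in \mathbb{R}[x_1,\dots,x_n]$ be a multilinear polynomial of degree at most $d$ all of whose coefficients have absolute value at most $q$. Let $\vec\sigma$ be a uniformly random vector in $\{0,1\}^n$ with exactly $k$ ones. Then $\mathrm{Var}[\lambda(\vec\sigma)] \le C_{d,q}\, n^{2d-1}$ for some constant $C_{d,q}$ depending only on $d$ and $q$. -/
open Finset
open scoped Classical
open scoped BigOperators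

/-!
Adding `q (1 + x₁ + ⋯ + xₙ) ^ d`, which is constant on the slice, leaves the variance unchanged and
makes every coefficient nonnegative and at most `q (1 + (d + 1) ^ d)`. Expanding the variance as
`∑ c_W c_W' Cov(x^W, x^W')`, the disjoint pairs contribute nonpositively: `Pr[W ⊆ σ]` is the ratio
of falling factorials `k^(|W|) / n^(|W|)`, which makes monomials on disjoint sets negatively
correlated. Each of the at most `d² n^(2d-1)` intersecting pairs of sets of size `≤ d` contributes
at most the square of the coefficient bound.
-/

section Covariance

variable {α : Type*}

noncomputable def covOn (S : Finset α) (f g : α → ℝ) : ℝ :=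
  𝔼 x ∈ S, f x * g x - (𝔼 x ∈ S, f x) * 𝔼 x ∈ S, g x

lemma sum_sq_sub_mean_div_card (S : Finset α) (f : α → ℝ) :
    (∑ x ∈ S, (f x - (∑ y ∈ S, f y) / #S) ^ 2) / #S = covOn S f f := by
  rcases S.eq_empty_or_nonempty with rfl | hS
  · simp [covOn]
  simp only [← expect_eq_sum_div_card, covOn, sub_sq, expect_add_distrib, expect_sub_distrib,
    ← expect_mul, ← mul_expect, expect_const hS]
  simp only [sq]
  ring

lemma covOn_sum_sum {ι : Type*} (S : Finset α) (s : Finset ι) (c : ι → ℝ) (X : ι → α → ℝ) :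
    covOn S (fun x ↦ ∑ i ∈ s, c i * X i x) (fun x ↦ ∑ i ∈ s, c i * X i x) =
      ∑ i ∈ s, ∑ j ∈ s, c i * c j * covOn S (X i) (X j) := by
  simp only [covOn, sum_mul_sum, expect_sum_comm, mul_sub, sum_sub_distrib, mul_expect]
  congr 1
  · refine sum_congr rfl fun i _ ↦ sum_congr rfl fun j _ ↦ expect_congr rfl fun x _ ↦ by ring
  · refine sum_congr rfl fun i _ ↦ sum_congr rfl fun j _ ↦ ?_
    simp only [← mul_expect]; ring

lemma covOn_congr_add_const {S : Finset α} {f g : α → ℝ} {a : ℝ} (h : ∀ x ∈ S, g x = f x + a) :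
    covOn S g g = covOn S f f := by
  rcases S.eq_empty_or_nonempty with rfl | hS
  · simp [covOn]
  rw [covOn, covOn, expect_congr rfl h,
    expect_congr rfl fun x hx ↦ show g x * g x = (f x + a) * (f x + a) by rw [h x hx]]
  simp only [mul_add, add_mul, expect_add_distrib, ← mul_expect, ← expect_mul, expect_const hS]
  ring

lemma covOn_le_one {S : Finset α} {f g : α → ℝ} (hf₀ : ∀ x ∈ S, 0 ≤ f x) (hf₁ : ∀ x ∈ S, f x ≤ 1)
    (hg₀ : ∀ x ∈ S, 0 ≤ g x) (hg₁ : ∀ x ∈ S, g x ≤ 1) : covOn S f g ≤ 1 := by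
  rcases S.eq_empty_or_nonempty with rfl | hS
  · simp [covOn]
  have hfg : 𝔼 x ∈ S, f x * g x ≤ 1 := by
    simpa [expect_const hS] using expect_le_expect (s := S) (g := fun _ ↦ (1 : ℝ))
      fun x hx ↦ mul_le_one₀ (hf₁ x hx) (hg₀ x hx) (hg₁ x hx)
  have := mul_nonneg (expect_nonneg hf₀) (expect_nonneg hg₀)
  unfold covOn; linarith

end Covariance

lemma tsub_mul_le_mul_tsub {x y : ℕ} (hxy : x ≤ y) (a : ℕ) : (x - a) * y ≤ x * (y - a) := by
  rw [tsub_mul, mul_tsub, mul_comm x a]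
  exact tsub_le_tsub_left (Nat.mul_le_mul_left a hxy) _

lemma descFactorial_sub_mul_descFactorial_le {k n : ℕ} (hkn : k ≤ n) (a b : ℕ) :
    (k - a).descFactorial b * n.descFactorial b ≤ k.descFactorial b * (n - a).descFactorial b := by
  induction b with
  | zero => simp
  | succ b ih =>
    have step : (k - a - b) * (n - b) ≤ (k - b) * (n - a - b) := by
      rw [Nat.sub_right_comm k, Nat.sub_right_comm n]
      exact tsub_mul_le_mul_tsub (by omega) a
    simp only [Nat.descFactorial_succ]
    calc _ = ((k - a - b) * (n - b)) * ((k - a).descFactorial b * n.descFactorial b) := by ring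
      _ ≤ ((k - b) * (n - a - b)) * (k.descFactorial b * (n - a).descFactorial b) :=
        Nat.mul_le_mul step ih
      _ = _ := by ring

lemma descFactorial_div_descFactorial_add_le {k n : ℕ} (hkn : k ≤ n) (a b : ℕ) :
    (k.descFactorial (a + b) : ℝ) / n.descFactorial (a + b) ≤
      (k.descFactorial a / n.descFactorial a) * (k.descFactorial b / n.descFactorial b) := by
  rcases lt_or_ge n (a + b) with h | h
  · rw [Nat.descFactorial_eq_zero_iff_lt.2 h, Nat.cast_zero, div_zero]
    positivity
  have split (m : ℕ) : m.descFactorial (a + b) = (m - a).descFactorial b * m.descFactorial a := by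
    simpa using (Nat.descFactorial_mul_descFactorial (n := m) (Nat.le_add_right a b)).symm
  have hpos₁ : (0 : ℝ) < (n - a).descFactorial b := by
    exact_mod_cast Nat.descFactorial_pos.2 (by omega)
  have hpos₂ : (0 : ℝ) < n.descFactorial b := by
    exact_mod_cast Nat.descFactorial_pos.2 (by omega)
  rw [split, split, Nat.cast_mul, Nat.cast_mul, mul_div_mul_comm, mul_comm]
  refine mul_le_mul_of_nonneg_left ((div_le_div_iff₀ hpos₁ hpos₂).2 ?_) (by positivity)
  exact_mod_cast descFactorial_sub_mul_descFactorial_le hkn a b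

section Slice

variable {ι : Type*} [DecidableEq ι]

lemma expect_powersetCard_subset {t V : Finset ι} (hV : V ⊆ t) {k : ℕ} (hk : k ≤ #t) :
    𝔼 σ ∈ t.powersetCard k, (if V ⊆ σ then (1 : ℝ) else 0) =
      (k.descFactorial #V : ℝ) / (#t).descFactorial #V := by
  rw [expect_eq_sum_div_card, sum_boole, card_powersetCard]
  rcases le_or_gt #V k with hVk | hVk
  · have hchoose : (0 : ℝ) < (#t).choose k := by exact_mod_cast Nat.choose_pos hk
    have hdesc : (0 : ℝ) < (#t).descFactorial #V := by
      exact_mod_cast Nat.descFactorial_pos.2 (hVk.trans hk)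
    rw [card_filter_powersetCard_subset V t k hV hVk, div_eq_div_iff hchoose.ne' hdesc.ne']
    norm_cast
    rw [Nat.descFactorial_eq_factorial_mul_choose, Nat.descFactorial_eq_factorial_mul_choose]
    calc _ = (#V).factorial * ((#t).choose #V * (#t - #V).choose (k - #V)) := by ring
      _ = (#V).factorial * ((#t).choose k * k.choose #V) := by rw [Nat.choose_mul hVk]
      _ = _ := by ring
  · have hempty : {σ ∈ t.powersetCard k | V ⊆ σ} = ∅ :=
      filter_eq_empty_iff.2 fun σ hσ hVσ ↦
        ((card_le_card hVσ).trans (mem_powersetCard.1 hσ).2.le).not_gt hVk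
    rw [hempty, Nat.descFactorial_eq_zero_iff_lt.2 hVk]
    simp

lemma covOn_powersetCard_nonpos_of_disjoint [Fintype ι] {k : ℕ} (hk : k ≤ Fintype.card ι)
    {W W' : Finset ι} (h : Disjoint W W') :
    covOn (univ.powersetCard k) (fun σ ↦ if W ⊆ σ then 1 else 0)
      (fun σ ↦ if W' ⊆ σ then 1 else 0) ≤ 0 := by
  have hprod (σ : Finset ι) : ((if W ⊆ σ then 1 else 0) * (if W' ⊆ σ then 1 else 0) : ℝ) =
      if W ∪ W' ⊆ σ then 1 else 0 := by
    rw [ite_zero_mul_ite_zero, one_mul]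
    simp only [union_subset_iff]
  rw [← card_univ] at hk
  simp only [covOn, hprod, expect_powersetCard_subset (subset_univ _) hk,
    card_union_of_disjoint h]
  linarith [descFactorial_div_descFactorial_add_le hk #W #W']

end Slice

section SumPowCoeff

variable {ι : Type*} [DecidableEq ι]

lemma eraseNone_image_subset_iff {d : ℕ} {t : Fin d → Option ι} {σ : Finset ι} :
    (univ.image t).eraseNone ⊆ σ ↔ ∀ j, t j ∈ insertNone σ := by
  simp only [subset_iff, mem_eraseNone, mem_image, mem_univ, true_and, mem_insertNone,
    Option.mem_def]
  exact ⟨fun h j x hx ↦ h ⟨j, hx⟩, fun h x ⟨j, hj⟩ ↦ h j x hj⟩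

variable [Fintype ι]

/-- The coefficient of `x^W` in the multilinear reduction of `(1 + x₁ + ⋯ + xₙ) ^ d`: expanding the
power, a word `t : Fin d → Option ι` contributes the monomial over the letters it uses, `none`
standing for the summand `1`. -/
def sumPowCoeff (d : ℕ) (W : Finset ι) : ℕ :=
  #{t : Fin d → Option ι | (univ.image t).eraseNone = W}

lemma sum_powerset_sumPowCoeff (d : ℕ) (σ : Finset ι) :
    ∑ W ∈ σ.powerset, sumPowCoeff d W = (#σ + 1) ^ d := by
  simp only [sumPowCoeff]
  rw [sum_card_fiberwise_eq_card_filter, ← card_insertNone, ← Fintype.card_piFinset_const]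
  congr 1
  ext t
  simp only [mem_filter, mem_univ, true_and, mem_powerset, Fintype.mem_piFinset,
    eraseNone_image_subset_iff]

lemma one_le_sumPowCoeff {d : ℕ} {W : Finset ι} (hW : #W ≤ d) : 1 ≤ sumPowCoeff d W := by
  refine card_pos.2 ⟨fun j ↦ W.toList[(j : ℕ)]?, mem_filter.2 ⟨mem_univ _, ?_⟩⟩
  ext x
  simp only [mem_eraseNone, mem_image, mem_univ, true_and]
  rw [← mem_toList, List.mem_iff_getElem?]
  refine ⟨fun ⟨j, hj⟩ ↦ ⟨j, hj⟩, fun ⟨j, hj⟩ ↦ ⟨⟨j, ?_⟩, hj⟩⟩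
  exact (List.getElem?_eq_some_iff.1 hj).1.trans_le ((length_toList W).trans_le hW)

lemma sumPowCoeff_le (d : ℕ) (W : Finset ι) : sumPowCoeff d W ≤ (#W + 1) ^ d := by
  rw [← card_insertNone, ← Fintype.card_piFinset_const]
  refine card_le_card fun t ht ↦ ?_
  exact Fintype.mem_piFinset.2 (eraseNone_image_subset_iff.1 (mem_filter.1 ht).2.le)

lemma sumPowCoeff_eq_zero {d : ℕ} {W : Finset ι} (hW : d < #W) : sumPowCoeff d W = 0 := by
  refine card_eq_zero.2 (filter_eq_empty_iff.2 fun t _ ht ↦ hW.not_ge ?_)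
  calc #W = #(univ.image t).eraseNone := by rw [ht]
    _ ≤ #(univ.image t) := card_eraseNone_le _
    _ ≤ d := card_image_le.trans (card_fin d).le

end SumPowCoeff

section Counting

variable {ι : Type*} [Fintype ι] [DecidableEq ι] [Nonempty ι]

lemma card_filter_card_le_le (d : ℕ) :
    #{W : Finset ι | #W ≤ d} ≤ (d + 1) * Fintype.card ι ^ d := by
  calc #{W : Finset ι | #W ≤ d}
      ≤ #((range (d + 1)).biUnion fun j ↦ (univ : Finset ι).powersetCard j) :=
        card_le_card fun W hW ↦ mem_biUnion.2
          ⟨#W, mem_range.2 (Nat.lt_succ_of_le (mem_filter.1 hW).2), mem_powersetCard_univ.2 rfl⟩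
    _ ≤ ∑ j ∈ range (d + 1), #((univ : Finset ι).powersetCard j) := card_biUnion_le
    _ ≤ ∑ _j ∈ range (d + 1), Fintype.card ι ^ d := sum_le_sum fun j hj ↦ by
        rw [card_powersetCard, card_univ]
        exact (Nat.choose_le_pow _ _).trans
          (Nat.pow_le_pow_right Fintype.card_pos (Nat.lt_succ_iff.1 (mem_range.1 hj)))
    _ = (d + 1) * Fintype.card ι ^ d := by simp

lemma card_filter_card_le_mem_le (d : ℕ) (i : ι) :
    #{W : Finset ι | #W ≤ d ∧ i ∈ W} ≤ d * Fintype.card ι ^ (d - 1) := by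
  rcases d with _ | d
  · simp
  calc #{W : Finset ι | #W ≤ d + 1 ∧ i ∈ W} ≤ #{W : Finset ι | #W ≤ d} := by
        refine card_le_card_of_injOn (·.erase i) (fun W hW ↦ ?_) fun W hW W' hW' h ↦ ?_
        · simp only [coe_filter, mem_univ, true_and, Set.mem_ofPred_eq] at hW ⊢
          rw [card_erase_of_mem hW.2]
          omega
        · simp only [coe_filter, mem_univ, true_and, Set.mem_ofPred_eq] at hW hW'
          rw [← insert_erase hW.2, ← insert_erase hW'.2]
          exact congrArg (insert i) h
    _ ≤ (d + 1) * Fintype.card ι ^ d := card_filter_card_le_le d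
    _ = (d + 1) * Fintype.card ι ^ (d + 1 - 1) := rfl

lemma card_filter_not_disjoint_le (d : ℕ) :
    #{p : Finset ι × Finset ι | #p.1 ≤ d ∧ #p.2 ≤ d ∧ ¬Disjoint p.1 p.2} ≤
      d ^ 2 * Fintype.card ι ^ (2 * d - 1) := by
  set M : ι → Finset (Finset ι) := fun i ↦ {W | #W ≤ d ∧ i ∈ W}
  calc #{p : Finset ι × Finset ι | #p.1 ≤ d ∧ #p.2 ≤ d ∧ ¬Disjoint p.1 p.2}
      ≤ #(univ.biUnion fun i ↦ M i ×ˢ M i) := card_le_card fun p hp ↦ by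
        obtain ⟨h₁, h₂, hp⟩ := (mem_filter.1 hp).2
        obtain ⟨i, hi₁, hi₂⟩ := not_disjoint_iff.1 hp
        simp only [M, mem_biUnion, mem_univ, true_and, mem_product, mem_filter]
        exact ⟨i, ⟨h₁, hi₁⟩, h₂, hi₂⟩
    _ ≤ ∑ i, #(M i ×ˢ M i) := card_biUnion_le
    _ ≤ ∑ _i : ι, (d * Fintype.card ι ^ (d - 1)) ^ 2 := sum_le_sum fun i _ ↦ by
        rw [card_product, sq]
        exact Nat.mul_le_mul (card_filter_card_le_mem_le d i) (card_filter_card_le_mem_le d i)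
    _ = d ^ 2 * Fintype.card ι ^ (2 * d - 1) := by
        rcases d with _ | d
        · simp
        rw [sum_const, card_univ, smul_eq_mul, Nat.add_sub_cancel,
          show 2 * (d + 1) - 1 = 2 * d + 1 by omega]
        ring

end Counting

section Variance

variable {ι : Type*} [Fintype ι] [DecidableEq ι]

lemma sum_mul_covOn_powersetCard_le [Nonempty ι] {k d : ℕ} (hk : k ≤ Fintype.card ι)
    {c : Finset ι → ℝ} {B : ℝ} (hc₀ : ∀ W, 0 ≤ c W) (hcB : ∀ W, c W ≤ B)
    (hcd : ∀ W, d < #W → c W = 0) :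
    ∑ W, ∑ W', c W * c W' * covOn (univ.powersetCard k) (fun σ ↦ if W ⊆ σ then 1 else 0)
      (fun σ ↦ if W' ⊆ σ then 1 else 0) ≤ B ^ 2 * (d ^ 2 * Fintype.card ι ^ (2 * d - 1)) := by
  have hB : 0 ≤ B := (hc₀ ∅).trans (hcB ∅)
  have hind₀ (V σ : Finset ι) : (0 : ℝ) ≤ if V ⊆ σ then 1 else 0 := by positivity
  have hind₁ (V σ : Finset ι) : (if V ⊆ σ then 1 else 0 : ℝ) ≤ 1 := ite_le_one le_rfl zero_le_one
  calc _ ≤ ∑ W, ∑ W', if #W ≤ d ∧ #W' ≤ d ∧ ¬Disjoint W W' then B ^ 2 else 0 := by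
        gcongr with W _ W' _
        split_ifs with h
        · calc _ ≤ c W * c W' * 1 := mul_le_mul_of_nonneg_left
                (covOn_le_one (fun σ _ ↦ hind₀ W σ) (fun σ _ ↦ hind₁ W σ)
                  (fun σ _ ↦ hind₀ W' σ) (fun σ _ ↦ hind₁ W' σ))
                (mul_nonneg (hc₀ W) (hc₀ W'))
            _ ≤ B ^ 2 := by rw [mul_one, sq]; exact mul_le_mul (hcB W) (hcB W') (hc₀ W') hB
        · rcases lt_or_ge d #W with hW | hW
          · simp [hcd W hW]
          rcases lt_or_ge d #W' with hW' | hW'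
          · simp [hcd W' hW']
          exact mul_nonpos_of_nonneg_of_nonpos (mul_nonneg (hc₀ W) (hc₀ W'))
            (covOn_powersetCard_nonpos_of_disjoint hk (not_not.1 fun h' ↦ h ⟨hW, hW', h'⟩))
    _ = B ^ 2 * #{p : Finset ι × Finset ι | #p.1 ≤ d ∧ #p.2 ≤ d ∧ ¬Disjoint p.1 p.2} := by
        rw [← Fintype.sum_prod_type', sum_ite, sum_const_zero, add_zero, sum_const, nsmul_eq_mul,
          mul_comm]
    _ ≤ B ^ 2 * (d ^ 2 * Fintype.card ι ^ (2 * d - 1)) := by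
        gcongr
        exact_mod_cast card_filter_not_disjoint_le d

lemma add_mul_sumPowCoeff_mem_Icc {d : ℕ} {q : ℝ} {c : Finset ι → ℝ}
    (hdeg : ∀ W, d < #W → c W = 0) (habs : ∀ W, |c W| ≤ q) (W : Finset ι) :
    c W + q * sumPowCoeff d W ∈ Set.Icc 0 (q * (1 + (d + 1) ^ d)) := by
  have hq : 0 ≤ q := (abs_nonneg _).trans (habs W)
  rcases lt_or_ge d #W with hW | hW
  · rw [hdeg W hW, sumPowCoeff_eq_zero hW]
    simp only [add_zero, Nat.cast_zero, mul_zero, Set.left_mem_Icc]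
    positivity
  obtain ⟨hc₁, hc₂⟩ := abs_le.1 (habs W)
  have h₁ : (1 : ℝ) ≤ sumPowCoeff d W := by exact_mod_cast one_le_sumPowCoeff hW
  have h₂ : (sumPowCoeff d W : ℝ) ≤ (d + 1) ^ d := by
    exact_mod_cast (sumPowCoeff_le d W).trans (Nat.pow_le_pow_left (by omega) d)
  constructor <;> nlinarith

end Variance

theorem stmt_6 (d : ℕ) (q : ℝ) :
    ∃ C : ℝ, ∀ (n k : ℕ), 0 < k → k ≤ n →
      ∀ c : Finset (Fin n) → ℝ,
        (∀ W : Finset (Fin n), d < W.card → c W = 0) →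
        (∀ W : Finset (Fin n), |c W| ≤ q) →
        (let slice := (Finset.univ : Finset (Fin n)).powersetCard k
         let f : Finset (Fin n) → ℝ := fun σ =>
           ∑ W : Finset (Fin n), c W * ∏ i ∈ W, (if i ∈ σ then (1 : ℝ) else 0)
         let μ := (∑ σ ∈ slice, f σ) / (slice.card : ℝ)
         (∑ σ ∈ slice, (f σ - μ) ^ 2) / (slice.card : ℝ) ≤ C * (n : ℝ) ^ (2 * d - 1)) := by
  refine ⟨(q * (1 + (d + 1) ^ d)) ^ 2 * d ^ 2, fun n k hk hkn c hdeg habs ↦ ?_⟩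
  intro slice f μ
  have : Nonempty (Fin n) := ⟨⟨0, hk.trans_le hkn⟩⟩
  set c' : Finset (Fin n) → ℝ := fun W ↦ c W + q * sumPowCoeff d W
  have hf (σ : Finset (Fin n)) : f σ = ∑ W, c W * if W ⊆ σ then 1 else 0 := by
    simp only [f, prod_boole, ← subset_iff]
  have hshift : ∀ σ ∈ slice, ∑ W, c' W * (if W ⊆ σ then 1 else 0) = f σ + q * (k + 1) ^ d := by
    intro σ hσ
    have hg : ∑ W, (sumPowCoeff d W : ℝ) * (if W ⊆ σ then 1 else 0) = (k + 1) ^ d := by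
      rw [← (mem_powersetCard.1 hσ).2]
      simp only [mul_ite, mul_one, mul_zero, sum_ite, sum_const_zero, add_zero, filter_subset_univ]
      exact_mod_cast sum_powerset_sumPowCoeff d σ
    simp only [c', add_mul, sum_add_distrib, hf, mul_assoc, ← mul_sum, hg]
  calc _ = covOn slice f f := sum_sq_sub_mean_div_card slice f
    _ = covOn slice (fun σ ↦ ∑ W, c' W * if W ⊆ σ then 1 else 0)
          (fun σ ↦ ∑ W, c' W * if W ⊆ σ then 1 else 0) := (covOn_congr_add_const hshift).symm
    _ = ∑ W, ∑ W', c' W * c' W' * covOn slice (fun σ ↦ if W ⊆ σ then 1 else 0)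
          (fun σ ↦ if W' ⊆ σ then 1 else 0) := covOn_sum_sum _ _ _ _
    _ ≤ (q * (1 + (d + 1) ^ d)) ^ 2 * (d ^ 2 * Fintype.card (Fin n) ^ (2 * d - 1)) :=
        sum_mul_covOn_powersetCard_le (by simpa using hkn)
          (fun W ↦ (add_mul_sumPowCoeff_mem_Icc hdeg habs W).1)
          (fun W ↦ (add_mul_sumPowCoeff_mem_Icc hdeg habs W).2)
          (fun W hW ↦ by simp [c', hdeg W hW, sumPowCoeff_eq_zero hW])
    _ = _ := by rw [Fintype.card_fin]; ring
end

section
/- Let $G$ be a $d$-uniform hypergraph whose number of vertices $n$ satisfies $2k \le n \le Rk$ for some $k \ge 2d$, and suppose $G$ has a matching of size $m$. Let $U$ be a uniformly random $k$-vertex subset of the vertex set of $G$. Then, except with probability at most $C_{d,R}/m$, the induced subgraph $G[U]$ has a matching of size at least $c_{d,R} \cdot m$, where $c_{d,R} > 0$ and $C_{d,R}$ are constants depending only on $d$ and $R$. -/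
/-!
Fix a matching `M` of size `m` and let `N(U)` count the edges of `M` inside the random `k`-set `U`;
these edges form a matching of `G[U]`. With `T = C(n, k)`, `A = C(n - d, k - d)` and
`B = C(n - 2d, k - 2d)`, an edge of `M` lies in `U` for `A` of the `T` choices of `U`, and two disjoint
edges for `B` of them. Since `T B ≤ A²`, the pairwise covariances are nonpositive, so
`Var N ≤ E N = m A / T`, and Chebyshev gives `P(N < E N / 2) ≤ 4 / E N`. Finally
`T ≤ (2(R + 1))^d A` because `n ≤ (R + 1) k` and `2d ≤ k`, so `E N ≥ m / (2(R + 1))^d`.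
-/

open Finset
open scoped Classical

namespace Nat

theorem choose_mul_descFactorial (n : ℕ) {k d : ℕ} (hdk : d ≤ k) :
    n.choose k * k.descFactorial d = (n - d).choose (k - d) * n.descFactorial d := by
  rw [descFactorial_eq_factorial_mul_choose, descFactorial_eq_factorial_mul_choose,
    mul_left_comm, choose_mul hdk]
  ring

theorem descFactorial_mul_descFactorial_sub_le {n k : ℕ} (d : ℕ) (hkn : k ≤ n) :
    n.descFactorial d * (k - d).descFactorial d ≤ k.descFactorial d * (n - d).descFactorial d := by
  simp only [descFactorial_eq_prod_range, ← prod_mul_distrib]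
  refine prod_le_prod' fun i _ => ?_
  rcases le_or_gt (k - d) i with hi | hi
  · simp [Nat.sub_eq_zero_of_le hi]
  · -- with no truncation, `(n - i) (k - d - i) ≤ (k - i) (n - d - i)` reduces to `d k ≤ d n`
    have hkn' : (k : ℤ) ≤ n := by exact_mod_cast hkn
    zify [show i ≤ n by omega, show i ≤ k by omega, show i ≤ n - d by omega,
      show i ≤ k - d by omega, show d ≤ n by omega, show d ≤ k by omega]
    nlinarith [Int.natCast_nonneg d]

theorem choose_mul_choose_sub_two_mul_le_sq {n k d : ℕ} (h2d : 2 * d ≤ k) (hkn : k ≤ n) :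
    n.choose k * (n - 2 * d).choose (k - 2 * d) ≤ (n - d).choose (k - d) ^ 2 := by
  have h₁ := choose_mul_descFactorial n (k := k) (d := d) (by omega)
  have h₂ := choose_mul_descFactorial (n - d) (k := k - d) (d := d) (by omega)
  rw [show n - d - d = n - 2 * d by omega, show k - d - d = k - 2 * d by omega] at h₂
  refine le_of_mul_le_mul_right ?_
    (Nat.mul_pos (descFactorial_pos.mpr (by omega : d ≤ k))
      (descFactorial_pos.mpr (by omega : d ≤ n - d)))
  calc n.choose k * (n - 2 * d).choose (k - 2 * d) * (k.descFactorial d * (n - d).descFactorial d)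
      = (n.choose k * k.descFactorial d) *
          ((n - 2 * d).choose (k - 2 * d) * (n - d).descFactorial d) := by ring
    _ = (n - d).choose (k - d) ^ 2 * (n.descFactorial d * (k - d).descFactorial d) := by
        rw [h₁, ← h₂]; ring
    _ ≤ (n - d).choose (k - d) ^ 2 * (k.descFactorial d * (n - d).descFactorial d) :=
        Nat.mul_le_mul_left _ (descFactorial_mul_descFactorial_sub_le d hkn)

theorem descFactorial_le_pow_mul_descFactorial {n k d R : ℕ} (h2d : 2 * d ≤ k) (hnR : n ≤ R * k) :
    n.descFactorial d ≤ (2 * R) ^ d * k.descFactorial d := by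
  simp only [descFactorial_eq_prod_range]
  calc ∏ i ∈ range d, (n - i) ≤ ∏ i ∈ range d, 2 * R * (k - i) :=
        prod_le_prod' fun i hi => by
          have hi : i < d := mem_range.mp hi
          calc n - i ≤ R * k := (Nat.sub_le n i).trans hnR
            _ ≤ R * (2 * (k - i)) := Nat.mul_le_mul_left R (by omega)
            _ = 2 * R * (k - i) := by ring
    _ = (2 * R) ^ d * ∏ i ∈ range d, (k - i) := by rw [prod_mul_distrib, prod_const, card_range]

theorem choose_le_choose_sub_mul_pow {n k d R : ℕ} (h2d : 2 * d ≤ k) (hnR : n ≤ R * k) :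
    n.choose k ≤ (n - d).choose (k - d) * (2 * R) ^ d := by
  refine le_of_mul_le_mul_right ?_ (descFactorial_pos.mpr (by omega : d ≤ k))
  calc n.choose k * k.descFactorial d = (n - d).choose (k - d) * n.descFactorial d :=
        choose_mul_descFactorial n (by omega)
    _ ≤ (n - d).choose (k - d) * ((2 * R) ^ d * k.descFactorial d) :=
        Nat.mul_le_mul_left _ (descFactorial_le_pow_mul_descFactorial h2d hnR)
    _ = (n - d).choose (k - d) * (2 * R) ^ d * k.descFactorial d := by ring

end Nat

section Chebyshev

variable {ι : Type*}

theorem Finset.sum_sub_div_card_sq (s : Finset ι) (f : ι → ℝ) :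
    ∑ x ∈ s, (f x - (∑ y ∈ s, f y) / #s) ^ 2 = ∑ x ∈ s, f x ^ 2 - (∑ x ∈ s, f x) ^ 2 / #s := by
  rcases s.eq_empty_or_nonempty with rfl | hs
  · simp
  have hcard : (#s : ℝ) ≠ 0 := by exact_mod_cast hs.card_pos.ne'
  simp only [sub_sq, sum_add_distrib, sum_sub_distrib, sum_const, nsmul_eq_mul, ← sum_mul,
    ← mul_sum]
  field_simp
  ring

theorem Finset.card_mul_sq_le_sum_sub_sq {s t : Finset ι} (hts : t ⊆ s) (f : ι → ℝ) {μ δ : ℝ}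
    (hδ : 0 ≤ δ) (ht : ∀ x ∈ t, f x + δ ≤ μ) : #t * δ ^ 2 ≤ ∑ x ∈ s, (f x - μ) ^ 2 := by
  calc #t * δ ^ 2 = ∑ _x ∈ t, δ ^ 2 := by rw [sum_const, nsmul_eq_mul]
    _ ≤ ∑ x ∈ t, (f x - μ) ^ 2 := sum_le_sum fun x hx => by nlinarith [ht x hx]
    _ ≤ ∑ x ∈ s, (f x - μ) ^ 2 :=
        sum_le_sum_of_subset_of_nonneg hts fun _ _ _ => sq_nonneg _

end Chebyshev

section RandomSubset

variable {V : Type*} [Fintype V] [DecidableEq V] {k d : ℕ} {M : Finset (Finset V)}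

theorem card_powersetCard_univ_filter_superset (k : ℕ) {t : Finset V} (ht : #t ≤ k) :
    #{U ∈ (univ : Finset V).powersetCard k | t ⊆ U} = (Fintype.card V - #t).choose (k - #t) := by
  rw [card_filter_powersetCard_subset t univ k (subset_univ t) ht, card_univ]

theorem sum_card_filter_subset (hM : ∀ e ∈ M, #e = d) (hdk : d ≤ k) :
    ∑ U ∈ (univ : Finset V).powersetCard k, #{e ∈ M | e ⊆ U} =
      #M * (Fintype.card V - d).choose (k - d) := by
  have := sum_card_bipartiteAbove_eq_sum_card_bipartiteBelow
    (s := (univ : Finset V).powersetCard k) (t := M) (fun U e => e ⊆ U)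
  simp only [bipartiteAbove, bipartiteBelow] at this
  rw [this, sum_const_nat fun e he => ?_]
  rw [card_powersetCard_univ_filter_superset k (by rw [hM e he]; exact hdk), hM e he]

theorem sum_card_filter_subset_sq (hM : ∀ e ∈ M, #e = d)
    (hdisj : (M : Set (Finset V)).Pairwise Disjoint) (h2d : 2 * d ≤ k) :
    ∑ U ∈ (univ : Finset V).powersetCard k, #{e ∈ M | e ⊆ U} ^ 2 =
      #M * (Fintype.card V - d).choose (k - d) +
        #M * (#M - 1) * (Fintype.card V - 2 * d).choose (k - 2 * d) := by
  set A := (Fintype.card V - d).choose (k - d)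
  set B := (Fintype.card V - 2 * d).choose (k - 2 * d)
  have hsq (U : Finset V) : #{e ∈ M | e ⊆ U} ^ 2 = #{p ∈ M ×ˢ M | p.1 ∪ p.2 ⊆ U} := by
    rw [sq, ← card_product, ← filter_product]
    simp only [union_subset_iff]
  have hpair : ∀ e ∈ M, ∀ f ∈ M,
      #{U ∈ (univ : Finset V).powersetCard k | e ∪ f ⊆ U} = if e = f then A else B := by
    intro e he f hf
    split_ifs with hef
    · subst hef
      rw [union_self, card_powersetCard_univ_filter_superset k (by rw [hM e he]; omega), hM e he]
    · have hcard : #(e ∪ f) = 2 * d := by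
        rw [card_union_of_disjoint (hdisj he hf hef), hM e he, hM f hf]; ring
      rw [card_powersetCard_univ_filter_superset k (by omega), hcard]
  have hrow : ∀ e ∈ M, ∑ f ∈ M, (if e = f then A else B) = A + (#M - 1) * B := by
    intro e he
    rw [← add_sum_erase M _ he, if_pos rfl, ← card_erase_of_mem he,
      sum_const_nat fun f hf => if_neg (ne_of_mem_erase hf).symm]
  have := sum_card_bipartiteAbove_eq_sum_card_bipartiteBelow
    (s := (univ : Finset V).powersetCard k) (t := M ×ˢ M) (fun U p => p.1 ∪ p.2 ⊆ U)
  simp only [bipartiteAbove, bipartiteBelow] at this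
  simp only [hsq, this, sum_product]
  rw [sum_congr rfl fun e he => (sum_congr rfl fun f hf => hpair e he f hf).trans (hrow e he),
    sum_const, smul_eq_mul]
  ring

theorem sum_card_filter_subset_sub_mean_sq_le (hM : ∀ e ∈ M, #e = d)
    (hdisj : (M : Set (Finset V)).Pairwise Disjoint) (h2d : 2 * d ≤ k)
    (hkn : k ≤ Fintype.card V) :
    ∑ U ∈ (univ : Finset V).powersetCard k, ((#{e ∈ M | e ⊆ U} : ℝ) -
        #M * ((Fintype.card V - d).choose (k - d) : ℕ) / (Fintype.card V).choose k) ^ 2 ≤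
      #M * ((Fintype.card V - d).choose (k - d) : ℕ) := by
  set Ω := (univ : Finset V).powersetCard k
  set A := (Fintype.card V - d).choose (k - d)
  set B := (Fintype.card V - 2 * d).choose (k - 2 * d)
  set T := (Fintype.card V).choose k
  set m := #M
  have hΩ : #Ω = T := by rw [card_powersetCard, card_univ]
  have hT : (0 : ℝ) < T := by exact_mod_cast Nat.choose_pos hkn
  have hS₁ : ∑ U ∈ Ω, (#{e ∈ M | e ⊆ U} : ℝ) = m * A := by
    exact_mod_cast sum_card_filter_subset hM (by omega)
  have hS₂ : ∑ U ∈ Ω, (#{e ∈ M | e ⊆ U} : ℝ) ^ 2 ≤ m * A + m ^ 2 * B := by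
    have := (sum_card_filter_subset_sq hM hdisj h2d).le.trans <| Nat.add_le_add_left
      (Nat.mul_le_mul_right B (sq m ▸ Nat.mul_le_mul_left m (Nat.sub_le m 1))) (m * A)
    exact_mod_cast this
  have hTB : (T : ℝ) * B ≤ A ^ 2 := by
    exact_mod_cast Nat.choose_mul_choose_sub_two_mul_le_sq h2d hkn
  have hmean : (m * A / T : ℝ) = (∑ U ∈ Ω, (#{e ∈ M | e ⊆ U} : ℝ)) / #Ω := by rw [hS₁, hΩ]
  have hB : (m : ℝ) ^ 2 * B ≤ (m * A) ^ 2 / T := by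
    rw [le_div_iff₀ hT]
    nlinarith [sq_nonneg (m : ℝ)]
  rw [hmean, sum_sub_div_card_sq, hS₁, hΩ]
  linarith

theorem card_filter_lt_half_mean_div_le (hM : ∀ e ∈ M, #e = d)
    (hdisj : (M : Set (Finset V)).Pairwise Disjoint) (h2d : 2 * d ≤ k)
    (hkn : k ≤ Fintype.card V) (hm : 0 < #M) :
    (#{U ∈ (univ : Finset V).powersetCard k | (#{e ∈ M | e ⊆ U} : ℝ) <
        #M * ((Fintype.card V - d).choose (k - d) : ℕ) / (Fintype.card V).choose k / 2} : ℝ) /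
        (Fintype.card V).choose k ≤
      4 * (Fintype.card V).choose k / (#M * ((Fintype.card V - d).choose (k - d) : ℕ)) := by
  set A := (Fintype.card V - d).choose (k - d)
  set T := (Fintype.card V).choose k
  set D := #{U ∈ (univ : Finset V).powersetCard k | (#{e ∈ M | e ⊆ U} : ℝ) < #M * A / T / 2}
  have hT : (0 : ℝ) < T := by exact_mod_cast Nat.choose_pos hkn
  have hmA : (0 : ℝ) < #M * A := by
    have : 0 < A := Nat.choose_pos (by omega)
    positivity
  have hcheb : (D : ℝ) * (#M * A / T / 2) ^ 2 ≤ #M * A :=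
    (card_mul_sq_le_sum_sub_sq (μ := #M * A / T) (filter_subset _ _) _ (by positivity)
        fun U hU => by linarith [(mem_filter.mp hU).2]).trans
      (sum_card_filter_subset_sub_mean_sq_le hM hdisj h2d hkn)
  rw [div_le_div_iff₀ hT hmA]
  refine le_of_mul_le_mul_right ?_ hmA
  have hsq : (#M * A / T / 2 : ℝ) ^ 2 * (4 * T ^ 2) = (#M * A) ^ 2 := by field_simp; ring
  calc (D : ℝ) * (#M * A) * (#M * A) = D * (#M * A / T / 2) ^ 2 * (4 * T ^ 2) := by
        rw [mul_assoc (D : ℝ) (_ ^ 2), hsq]; ring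
    _ ≤ #M * A * (4 * T ^ 2) := by gcongr
    _ = 4 * T * T * (#M * A) := by ring

theorem card_filter_lt_div_le_of_choose_le_mul (hM : ∀ e ∈ M, #e = d)
    (hdisj : (M : Set (Finset V)).Pairwise Disjoint) (h2d : 2 * d ≤ k)
    (hkn : k ≤ Fintype.card V) {X : ℝ}
    (hTX : ((Fintype.card V).choose k : ℝ) ≤ ((Fintype.card V - d).choose (k - d) : ℕ) * X) :
    (#{U ∈ (univ : Finset V).powersetCard k | (#{e ∈ M | e ⊆ U} : ℝ) < #M / (2 * X)} : ℝ) /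
        (Fintype.card V).choose k ≤ 4 * X / #M := by
  rcases (#M).eq_zero_or_pos with hm | hm
  · simp [hm, filter_false_of_mem fun U _ => (Nat.cast_nonneg (α := ℝ) _).not_gt]
  set A := (Fintype.card V - d).choose (k - d)
  set T := (Fintype.card V).choose k
  have hT : (0 : ℝ) < T := by exact_mod_cast Nat.choose_pos hkn
  have hm' : (0 : ℝ) < #M := by exact_mod_cast hm
  have hA : (0 : ℝ) < A := by exact_mod_cast Nat.choose_pos (by omega)
  have hX : 0 < X := pos_of_mul_pos_right (hT.trans_le hTX) hA.le
  calc _ ≤ (#{U ∈ (univ : Finset V).powersetCard k |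
          (#{e ∈ M | e ⊆ U} : ℝ) < #M * A / T / 2} : ℝ) / T := by
        refine div_le_div_of_nonneg_right ?_ hT.le
        refine Nat.cast_le.mpr (card_le_card (monotone_filter_right _ fun U _ hN => ?_))
        refine hN.trans_le ?_
        rw [div_div, div_le_div_iff₀ (by positivity) (by positivity)]
        nlinarith
    _ ≤ 4 * T / (#M * A) := card_filter_lt_half_mean_div_le hM hdisj h2d hkn hm
    _ ≤ 4 * X / #M := by
        rw [div_le_div_iff₀ (by positivity) hm']
        nlinarith

end RandomSubset

theorem stmt_8_general (d R : ℕ) :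
    ∃ (C c : ℝ), 0 < c ∧
      ∀ (n k m : ℕ) (V : Type) [Fintype V] [DecidableEq V],
        Fintype.card V = n → 2 * k ≤ n → n ≤ R * k → 2 * d ≤ k →
        ∀ E : Finset (Finset V), (∀ e ∈ E, e.card = d) →
        (∃ M ⊆ E, M.card = m ∧ ∀ a ∈ M, ∀ b ∈ M, a ≠ b → Disjoint a b) →
        ((((Finset.univ : Finset V).powersetCard k).filter (fun U =>
            ¬ ∃ M ⊆ E.filter (fun e => e ⊆ U), c * m ≤ (M.card : ℝ) ∧
              ∀ a ∈ M, ∀ b ∈ M, a ≠ b → Disjoint a b)).card : ℝ) /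
          ((((Finset.univ : Finset V).powersetCard k).card : ℝ)) ≤ C / m := by
  refine ⟨4 * (2 * ((R : ℝ) + 1)) ^ d, 1 / (2 * (2 * ((R : ℝ) + 1)) ^ d), by positivity, ?_⟩
  intro n k m V _ _ hn h2k hnR h2d E hE ⟨M, hME, hMm, hMdisj⟩
  subst hn hMm
  have hkn : k ≤ Fintype.card V := by omega
  have hTX : ((Fintype.card V).choose k : ℝ) ≤
      ((Fintype.card V - d).choose (k - d) : ℕ) * (2 * ((R : ℝ) + 1)) ^ d := by
    exact_mod_cast Nat.choose_le_choose_sub_mul_pow h2d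
      (hnR.trans (Nat.mul_le_mul_right k R.le_succ))
  rw [card_powersetCard, card_univ]
  refine le_trans ?_ (card_filter_lt_div_le_of_choose_le_mul (fun e he => hE e (hME he)) hMdisj
    h2d hkn hTX)
  gcongr with U
  intro hU
  by_contra! h
  exact hU ⟨{e ∈ M | e ⊆ U}, filter_subset_filter _ hME, by rwa [one_div_mul_eq_div],
    fun a ha b hb => hMdisj a (mem_filter.mp ha).1 b (mem_filter.mp hb).1⟩

theorem stmt_8 (d R : ℕ) (hd : 0 < d) :
    ∃ (C c : ℝ), 0 < c ∧
      ∀ (n k m : ℕ) (V : Type) [Fintype V] [DecidableEq V],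
        Fintype.card V = n → 2 * k ≤ n → n ≤ R * k → 2 * d ≤ k →
        ∀ E : Finset (Finset V), (∀ e ∈ E, e.card = d) →
        (∃ M ⊆ E, M.card = m ∧ ∀ a ∈ M, ∀ b ∈ M, a ≠ b → Disjoint a b) →
        ((((Finset.univ : Finset V).powersetCard k).filter (fun U =>
            ¬ ∃ M ⊆ E.filter (fun e => e ⊆ U), c * m ≤ (M.card : ℝ) ∧
              ∀ a ∈ M, ∀ b ∈ M, a ≠ b → Disjoint a b)).card : ℝ) /
          ((((Finset.univ : Finset V).powersetCard k).card : ℝ)) ≤ C / m :=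
  stmt_8_general d R
end

section
/- For every $r, m \in \mathbb{N}$ there is a constant $C = C(r,m)$ such that every $r$-uniform hypergraph $G$ has a vertex set $Y$ with $|Y| \le C$ satisfying: for every $X \subseteq Y$ such that the hypergraph $G_Y(X)$ is nonempty, if $d$ is the maximum size of an edge of $G_Y(X)$, then the sub-hypergraph $G_Y^{(d)}(X)$ of edges of $G_Y(X)$ of size exactly $d$ contains a matching of size at least $m$. Moreover, if $Y \ne \emptyset$, then every edge of $G$ intersects $Y$. -/
open Finset
open scoped Classical

/-!
Call `A ⊆ Y` a trace of `Y` if `A = e ∩ Y` for an edge `e ⊄ Y`, with link the sets `e \ A` for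
such edges. Start from `Y = ∅` and, while some inclusion-minimal trace has no `m` pairwise
disjoint link members, add to `Y` a hitting set of that link; greedily it has at most `r m` vertices. This
kills the trace and creates no minimal trace smaller than the smallest one killed, so the vector
counting the minimal traces of each size `< r` decreases lexicographically. After `k` steps its
entries are at most `2 ^ (r m k)`, and a lexicographic descent in `ℕ ^ r` under such growing
bounds has length bounded in terms of `r` and `m` alone. Once the process stops, the largest
members of `G_Y(X)` form the link of a minimal trace inside `X`, which contains `m` disjoint sets.
-/

def LexLt (r : ℕ) (w v : ℕ → ℕ) : Prop :=
  ∃ i < r, (∀ j < i, w j = v j) ∧ w i < v i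

lemma LexLt.head_lt_or_tail {r : ℕ} {w v : ℕ → ℕ} (h : LexLt (r + 1) w v) :
    w 0 < v 0 ∨ w 0 = v 0 ∧ LexLt r (fun i => w (i + 1)) (fun i => v (i + 1)) := by
  obtain ⟨_ | i, hi, heq, hlt⟩ := h
  · exact .inl hlt
  · exact .inr ⟨heq 0 i.succ_pos, i, by omega, fun j hj => heq (j + 1) (by omega), hlt⟩

def IsBoundedLexDescent (r : ℕ) (g : ℕ → ℕ) (t : ℕ) (v : ℕ → ℕ → ℕ) (n : ℕ) :
    Prop :=
  (∀ s < n, LexLt r (v (s + 1)) (v s)) ∧ ∀ s ≤ n, ∀ i < r, v s i ≤ g (t + s)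

namespace IsBoundedLexDescent

variable {r : ℕ} {g : ℕ → ℕ} {t : ℕ} {v : ℕ → ℕ → ℕ} {n : ℕ}

lemma drop (h : IsBoundedLexDescent r g t v n) {k : ℕ} (hk : k ≤ n) :
    IsBoundedLexDescent r g (t + k) (fun s => v (k + s)) (n - k) := by
  refine ⟨fun s hs => by simpa [add_assoc] using h.1 (k + s) (by omega), fun s hs i hi => ?_⟩
  rw [add_assoc]
  exact h.2 (k + s) (by omega) i hi

lemma exists_tail_until_head_drop (h : IsBoundedLexDescent (r + 1) g t v n) :
    ∃ j ≤ n, IsBoundedLexDescent r g t (fun s i => v s (i + 1)) j ∧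
      (j < n → v (j + 1) 0 < v 0 0) := by
  let P j := n ≤ j ∨ v (j + 1) 0 < v j 0
  have hP : ∃ j, P j := ⟨n, .inl le_rfl⟩
  have hjn : Nat.find hP ≤ n := Nat.find_min' hP (.inl le_rfl)
  have hstep : ∀ s < Nat.find hP, v (s + 1) 0 = v s 0 ∧
      LexLt r (fun i => v (s + 1) (i + 1)) (fun i => v s (i + 1)) := fun s hs =>
    ((h.1 s (by omega)).head_lt_or_tail).resolve_left fun hlt =>
      Nat.find_min hP hs (.inr hlt)
  have hconst : ∀ s ≤ Nat.find hP, v s 0 = v 0 0 := by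
    intro s hs
    induction s with
    | zero => rfl
    | succ s ih => rw [(hstep s (by omega)).1, ih (by omega)]
  refine ⟨Nat.find hP, hjn, ⟨fun s hs => (hstep s hs).2,
    fun s hs i hi => h.2 s (by omega) (i + 1) (by omega)⟩, fun hlt => ?_⟩
  rw [← hconst _ le_rfl]
  exact (Nat.find_spec hP).resolve_left (by omega)

end IsBoundedLexDescent

theorem exists_bound_of_isBoundedLexDescent {g : ℕ → ℕ} (hg : Monotone g) (r : ℕ) :
    ∃ F : ℕ → ℕ, Monotone F ∧ ∀ t v n, IsBoundedLexDescent r g t v n → n ≤ F t := by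
  induction r with
  | zero =>
    refine ⟨0, monotone_const, fun t v n h => ?_⟩
    by_contra! hn
    obtain ⟨i, hi, -⟩ := h.1 0 (by omega)
    omega
  | succ r ih =>
    obtain ⟨Fr, hFr, hF⟩ := ih
    -- A descent started at time `t` drops its head coordinate before time `φ t`, then restarts.
    set φ : ℕ → ℕ := fun t => t + Fr t + 1 with hφ
    have hφ_mono : Monotone φ := fun a b hab => by have := hFr hab; simp only [hφ]; omega
    have hφ_id : id ≤ φ := fun a => by simp only [hφ, id]; omega
    have key : ∀ c t v n, IsBoundedLexDescent (r + 1) g t v n → v 0 0 ≤ c →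
        t + n < φ^[c + 1] t := by
      intro c
      induction c using Nat.strong_induction_on with
      | _ c ihc =>
        intro t v n h hc
        obtain ⟨j, hjn, htail, hdrop⟩ := h.exists_tail_until_head_drop
        have hj : j ≤ Fr t := hF t _ j htail
        rcases hjn.lt_or_eq with hjn | rfl
        · have hhead := hdrop hjn
          obtain ⟨c, rfl⟩ : ∃ c', c = c' + 1 := ⟨c - 1, by omega⟩
          have hrest := ihc c (by omega) _ _ _ (h.drop hjn) (show v (j + 1) 0 ≤ c by omega)
          calc t + n = t + (j + 1) + (n - (j + 1)) := by omega
            _ < φ^[c + 1] (t + (j + 1)) := hrest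
            _ ≤ φ^[c + 1] (φ t) := (hφ_mono.iterate _) (by simp only [hφ]; omega)
            _ = φ^[c + 1 + 1] t := (Function.iterate_succ_apply _ _ _).symm
        · calc t + j < φ t := by simp only [hφ]; omega
            _ ≤ φ^[c] (φ t) := Function.id_le_iterate_of_id_le hφ_id c (φ t)
            _ = φ^[c + 1] t := (Function.iterate_succ_apply _ _ _).symm
    refine ⟨fun t => φ^[g t + 1] t, fun a b hab => ?_, fun t v n h => ?_⟩
    · calc φ^[g a + 1] a ≤ φ^[g a + 1] b := (hφ_mono.iterate _) hab
        _ ≤ φ^[g b + 1] b := Function.monotone_iterate_of_id_le hφ_id (by simpa using hg hab) b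
    · show n ≤ φ^[g t + 1] t
      have := key _ t v n h (by simpa using h.2 0 (Nat.zero_le _) 0 (by omega))
      omega

section Hypergraph

variable {V : Type} [DecidableEq V]

def HasMatching (S : Set (Finset V)) (m : ℕ) : Prop :=
  ∃ M : Finset (Finset V), M.card = m ∧ ↑M ⊆ S ∧ (M : Set (Finset V)).PairwiseDisjoint id

lemma exists_hittingSet_of_not_hasMatching {S : Set (Finset V)} {r : ℕ}
    (hne : ∀ f ∈ S, f.Nonempty) (hcard : ∀ f ∈ S, f.card ≤ r) {m : ℕ}
    (h : ¬ HasMatching S m) :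
    ∃ W : Finset V, W.card ≤ r * m ∧ ∀ f ∈ S, (f ∩ W).Nonempty := by
  induction m generalizing S with
  | zero => exact absurd ⟨∅, by simp⟩ h
  | succ m ih =>
    rcases S.eq_empty_or_nonempty with rfl | ⟨f, hf⟩
    · exact ⟨∅, by simp, by simp⟩
    -- A matching of the edges disjoint from `f` extends by `f`, so `f` together with a
    -- hitting set of those edges hits every edge.
    set S' := {g ∈ S | Disjoint g f}
    have h' : ¬ HasMatching S' m := by
      rintro ⟨M, hMcard, hMS, hMdisj⟩
      have hfM : f ∉ M := fun hfM =>
        (hne f hf).ne_empty (disjoint_self.mp (hMS hfM).2)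
      refine h ⟨insert f M, by rw [card_insert_of_notMem hfM, hMcard], ?_, ?_⟩
      · rw [coe_insert, Set.insert_subset_iff]
        exact ⟨hf, fun g hg => (hMS hg).1⟩
      · rw [coe_insert]
        exact hMdisj.insert fun g hg _ => (hMS hg).2.symm
    obtain ⟨W, hWcard, hW⟩ := ih (fun g hg => hne g hg.1) (fun g hg => hcard g hg.1) h'
    refine ⟨W ∪ f, ?_, fun g hg => ?_⟩
    · calc (W ∪ f).card ≤ W.card + f.card := card_union_le _ _
        _ ≤ r * (m + 1) := by have := hcard f hf; rw [mul_add_one]; omega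
    · by_cases hgf : Disjoint g f
      · exact (hW g ⟨hg, hgf⟩).mono (inter_subset_inter_left subset_union_left)
      · obtain ⟨x, hxg, hxf⟩ := not_disjoint_iff.mp hgf
        exact ⟨x, mem_inter.mpr ⟨hxg, mem_union_right _ hxf⟩⟩

end Hypergraph

section Traces

variable {V : Type} [DecidableEq V] {E : Set (Finset V)} {r : ℕ} {Y Y' A B : Finset V}

def IsTrace (E : Set (Finset V)) (Y A : Finset V) : Prop :=
  ∃ e ∈ E, e ∩ Y = A ∧ ¬ e ⊆ Y

def link (E : Set (Finset V)) (Y A : Finset V) : Set (Finset V) :=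
  {f | ∃ e ∈ E, e ∩ Y = A ∧ ¬ e ⊆ Y ∧ f = e \ A}

lemma IsTrace.subset (h : IsTrace E Y A) : A ⊆ Y := by
  obtain ⟨e, -, rfl, -⟩ := h
  exact inter_subset_right

lemma IsTrace.card_lt (hE : ∀ e ∈ E, e.card = r) (h : IsTrace E Y A) : A.card < r := by
  obtain ⟨e, he, rfl, hnot⟩ := h
  rw [← hE e he]
  exact card_lt_card (ssubset_of_subset_of_ne inter_subset_left fun h => hnot (inter_eq_left.mp h))

lemma nonempty_of_mem_link {f : Finset V} (hf : f ∈ link E Y A) : f.Nonempty := by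
  obtain ⟨e, -, rfl, hnot, rfl⟩ := hf
  exact sdiff_nonempty.mpr fun h => hnot (h.trans inter_subset_right)

lemma card_add_card_of_mem_link (hE : ∀ e ∈ E, e.card = r) {f : Finset V}
    (hf : f ∈ link E Y A) : f.card + A.card = r := by
  obtain ⟨e, he, rfl, -, rfl⟩ := hf
  rw [card_sdiff_of_subset inter_subset_left, hE e he]
  have := card_le_card (inter_subset_left : e ∩ Y ⊆ e)
  rw [hE e he] at this
  omega

lemma IsTrace.exists_subset_isTrace (hYY : Y ⊆ Y') (h : IsTrace E Y' B) :
    ∃ C ⊆ B, IsTrace E Y C := by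
  obtain ⟨e, he, rfl, hnot⟩ := h
  exact ⟨e ∩ Y, inter_subset_inter_left hYY, e, he, rfl, fun h => hnot (h.trans hYY)⟩

lemma Minimal.isTrace_of_superset (hYY : Y ⊆ Y') (hA : Minimal (IsTrace E Y) A)
    (h' : IsTrace E Y' A) : Minimal (IsTrace E Y') A := by
  refine ⟨h', fun B hB hBA => ?_⟩
  obtain ⟨C, hCB, hC⟩ := hB.exists_subset_isTrace hYY
  exact (hA.2 hC (hCB.trans hBA)).trans hCB

lemma Minimal.exists_ssubset_not_isTrace (hYY : Y ⊆ Y') (hB : Minimal (IsTrace E Y') B)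
    (hnew : ¬ Minimal (IsTrace E Y) B) :
    ∃ A ⊂ B, Minimal (IsTrace E Y) A ∧ ¬ IsTrace E Y' A := by
  obtain ⟨C, hCB, hC⟩ := hB.1.exists_subset_isTrace hYY
  obtain ⟨A, hAC, hA⟩ := exists_minimal_le_of_wellFoundedLT _ C hC
  have hAB : A ⊆ B := hAC.trans hCB
  by_cases hA' : IsTrace E Y' A
  · exact absurd (le_antisymm hAB (hB.2 hA' hAB) ▸ hA) hnew
  · exact ⟨A, ssubset_of_subset_of_ne hAB (by rintro rfl; exact hA' hB.1), hA, hA'⟩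

lemma Minimal.not_isTrace_union (hA : Minimal (IsTrace E Y) A) {W : Finset V}
    (hW : ∀ f ∈ link E Y A, (f ∩ W).Nonempty) : ¬ IsTrace E (Y ∪ W) A := by
  rintro ⟨e, he, heA, hnot⟩
  have hnotY : ¬ e ⊆ Y := fun h => hnot (h.trans subset_union_left)
  have hsub : e ∩ Y ⊆ A := heA ▸ inter_subset_inter_left subset_union_left
  have heY : e ∩ Y = A := le_antisymm hsub (hA.2 ⟨e, he, rfl, hnotY⟩ hsub)
  obtain ⟨x, hx⟩ := hW _ ⟨e, he, heY, hnotY, rfl⟩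
  simp only [mem_inter, mem_sdiff] at hx
  exact hx.1.2 (heA ▸ mem_inter.mpr ⟨hx.1.1, mem_union_right _ hx.2⟩)

noncomputable def minTracesOfCard (E : Set (Finset V)) (Y : Finset V) (j : ℕ) :
    Finset (Finset V) :=
  {A ∈ Y.powerset | Minimal (IsTrace E Y) A ∧ A.card = j}

lemma mem_minTracesOfCard {j : ℕ} :
    A ∈ minTracesOfCard E Y j ↔ Minimal (IsTrace E Y) A ∧ A.card = j := by
  rw [minTracesOfCard, mem_filter, mem_powerset]
  exact ⟨And.right, fun h => ⟨h.1.1.subset, h⟩⟩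

noncomputable def minTraceProfile (E : Set (Finset V)) (Y : Finset V) (j : ℕ) : ℕ :=
  (minTracesOfCard E Y j).card

lemma minTraceProfile_le (E : Set (Finset V)) (Y : Finset V) (j : ℕ) :
    minTraceProfile E Y j ≤ 2 ^ Y.card :=
  (card_filter_le _ _).trans (card_powerset Y).le

/-- Minimal traces smaller than the smallest one that disappears are unaffected by enlarging
`Y`, and at that size some disappear while none appear. -/
lemma minTraceProfile_lexLt (hE : ∀ e ∈ E, e.card = r) (hYY : Y ⊆ Y')
    (hA : Minimal (IsTrace E Y) A) (hdead : ¬ IsTrace E Y' A) :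
    LexLt r (minTraceProfile E Y') (minTraceProfile E Y) := by
  have hex : ∃ b, ∃ B, Minimal (IsTrace E Y) B ∧ ¬ IsTrace E Y' B ∧ B.card = b :=
    ⟨_, A, hA, hdead, rfl⟩
  obtain ⟨B₀, hB₀, hB₀dead, hB₀card⟩ := Nat.find_spec hex
  have hsurvive : ∀ B, Minimal (IsTrace E Y) B → B.card < Nat.find hex →
      Minimal (IsTrace E Y') B := fun B hB hcard =>
    hB.isTrace_of_superset hYY (by_contra fun h => Nat.find_min hex hcard ⟨B, hB, h, rfl⟩)
  have hold : ∀ B, Minimal (IsTrace E Y') B → B.card ≤ Nat.find hex →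
      Minimal (IsTrace E Y) B := fun B hB hcard => by_contra fun hnew => by
    obtain ⟨C, hCB, hC, hCdead⟩ := hB.exists_ssubset_not_isTrace hYY hnew
    exact Nat.find_min hex ((card_lt_card hCB).trans_le hcard) ⟨C, hC, hCdead, rfl⟩
  refine ⟨Nat.find hex, hB₀card ▸ hB₀.1.card_lt hE, fun j hj => ?_, card_lt_card ?_⟩
  · refine congrArg card (ext fun B => ?_)
    simp only [mem_minTracesOfCard]
    exact ⟨fun h => ⟨hold B h.1 (by omega), h.2⟩,
      fun h => ⟨hsurvive B h.1 (by omega), h.2⟩⟩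
  · refine Finset.ssubset_iff_subset_ne.mpr ⟨fun B hB => ?_, fun heq => ?_⟩
    · rw [mem_minTracesOfCard] at hB ⊢
      exact ⟨hold B hB.1 hB.2.le, hB.2⟩
    · have : B₀ ∈ minTracesOfCard E Y' (Nat.find hex) :=
        heq ▸ mem_minTracesOfCard.mpr ⟨hB₀, hB₀card⟩
      exact hB₀dead (mem_minTracesOfCard.mp this).1.1

end Traces

section Augmentation

variable {V : Type} [DecidableEq V] {E : Set (Finset V)} {r m : ℕ} {Y : Finset V}

def IsSaturated (E : Set (Finset V)) (m : ℕ) (Y : Finset V) : Prop :=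
  ∀ A, Minimal (IsTrace E Y) A → HasMatching (link E Y A) m

def IsAugmentation (E : Set (Finset V)) (r m : ℕ) (Y W : Finset V) : Prop :=
  W.card ≤ r * m ∧ LexLt r (minTraceProfile E (Y ∪ W)) (minTraceProfile E Y) ∧
    (Y = ∅ → ∀ e ∈ E, (e ∩ W).Nonempty)

/-- A minimal trace without a large matching in its link is killed by adding a hitting set of
that link. -/
lemma exists_isAugmentation_of_not_isSaturated (hE : ∀ e ∈ E, e.card = r)
    (h : ¬ IsSaturated E m Y) : ∃ W, IsAugmentation E r m Y W := by
  simp only [IsSaturated, not_forall] at h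
  obtain ⟨A, hA, hpoor⟩ := h
  obtain ⟨W, hWcard, hW⟩ := exists_hittingSet_of_not_hasMatching (r := r)
    (fun f hf => nonempty_of_mem_link hf)
    (fun f hf => by have := card_add_card_of_mem_link hE hf; omega) hpoor
  refine ⟨W, hWcard,
    minTraceProfile_lexLt hE subset_union_left hA (hA.not_isTrace_union hW), ?_⟩
  rintro rfl e he
  obtain rfl : A = ∅ := subset_empty.mp hA.1.subset
  have he_ne : e.Nonempty := card_pos.mp ((hE e he).symm ▸ hA.1.card_lt hE)
  simpa using hW e ⟨e, he, inter_empty e, fun h => he_ne.ne_empty (subset_empty.mp h), by simp⟩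

noncomputable def augmentSeq (E : Set (Finset V)) (r m : ℕ) : ℕ → Finset V
  | 0 => ∅
  | k + 1 =>
    if h : ∃ W, IsAugmentation E r m (augmentSeq E r m k) W then augmentSeq E r m k ∪ h.choose
    else augmentSeq E r m k

lemma augmentSeq_succ_of_exists {k : ℕ} (h : ∃ W, IsAugmentation E r m (augmentSeq E r m k) W) :
    ∃ W, IsAugmentation E r m (augmentSeq E r m k) W ∧
      augmentSeq E r m (k + 1) = augmentSeq E r m k ∪ W :=
  ⟨h.choose, h.choose_spec, by rw [augmentSeq, dif_pos h]⟩

lemma augmentSeq_succ_of_not_exists {k : ℕ}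
    (h : ¬ ∃ W, IsAugmentation E r m (augmentSeq E r m k) W) :
    augmentSeq E r m (k + 1) = augmentSeq E r m k := by
  rw [augmentSeq, dif_neg h]

lemma card_augmentSeq_le (E : Set (Finset V)) (r m k : ℕ) :
    (augmentSeq E r m k).card ≤ r * m * k := by
  induction k with
  | zero => simp [augmentSeq]
  | succ k ih =>
    by_cases h : ∃ W, IsAugmentation E r m (augmentSeq E r m k) W
    · obtain ⟨W, hW, heq⟩ := augmentSeq_succ_of_exists h
      rw [heq, mul_add_one]
      exact (card_union_le _ _).trans (add_le_add ih hW.1)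
    · rw [augmentSeq_succ_of_not_exists h]
      exact ih.trans (Nat.mul_le_mul_left _ k.le_succ)

lemma inter_augmentSeq_nonempty {k : ℕ} (hne : augmentSeq E r m k ≠ ∅) :
    ∀ e ∈ E, (e ∩ augmentSeq E r m k).Nonempty := by
  induction k with
  | zero => exact absurd rfl hne
  | succ k ih =>
    by_cases h : ∃ W, IsAugmentation E r m (augmentSeq E r m k) W
    · obtain ⟨W, hW, heq⟩ := augmentSeq_succ_of_exists h
      intro e he
      rw [heq, inter_union_distrib_left]
      rcases eq_or_ne (augmentSeq E r m k) ∅ with hk | hk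
      · exact (hW.2.2 hk e he).mono subset_union_right
      · exact (ih hk e he).mono subset_union_left
    · rw [augmentSeq_succ_of_not_exists h] at hne ⊢
      exact ih hne

/-- The minimal-trace profiles along the sequence descend lexicographically while staying below
`2 ^ (r * m * k)`, so the sequence must reach a saturated set within a bounded number of steps. -/
theorem exists_isSaturated_augmentSeq (r m : ℕ) :
    ∃ N, ∀ (V : Type) [DecidableEq V] (E : Set (Finset V)), (∀ e ∈ E, e.card = r) →
      ∃ k ≤ N, IsSaturated E m (augmentSeq E r m k) := by
  have hg : Monotone fun s => 2 ^ (r * m * s) := fun a b hab =>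
    Nat.pow_le_pow_right two_pos (Nat.mul_le_mul_left _ hab)
  obtain ⟨F, -, hF⟩ := exists_bound_of_isBoundedLexDescent hg r
  refine ⟨F 0, fun V _ E hE => ?_⟩
  by_contra! hunsat
  have hdesc : IsBoundedLexDescent r (fun s => 2 ^ (r * m * s)) 0
      (fun s => minTraceProfile E (augmentSeq E r m s)) (F 0 + 1) := by
    refine ⟨fun s hs => ?_, fun s _ j _ => ?_⟩
    · obtain ⟨W, hW, heq⟩ := augmentSeq_succ_of_exists
        (exists_isAugmentation_of_not_isSaturated hE (hunsat s (by omega)))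
      simpa only [heq] using hW.2.1
    · calc minTraceProfile E (augmentSeq E r m s) j ≤ 2 ^ (augmentSeq E r m s).card :=
            minTraceProfile_le _ _ _
        _ ≤ 2 ^ (r * m * (0 + s)) :=
            Nat.pow_le_pow_right two_pos (by simpa using card_augmentSeq_le E r m s)
  have := hF 0 _ _ hdesc
  omega

end Augmentation

section Residual

variable {V : Type} [DecidableEq V] {E : Set (Finset V)} {r m : ℕ} {Y X w₀ : Finset V}

/-- The hypergraph `G_Y(X)`. -/
def residualHypergraph (E : Set (Finset V)) (Y X : Finset V) : Set (Finset V) :=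
  {w | ∃ e ∈ E, Disjoint e (Y \ X) ∧ w = e \ X ∧ w ≠ ∅}

lemma mem_residualHypergraph_iff (hXY : X ⊆ Y) {w : Finset V} :
    w ∈ residualHypergraph E Y X ↔ ∃ A ⊆ X, w ∈ link E Y A := by
  have hsdiff : ∀ e : Finset V, e ∩ Y ⊆ X → e \ X = e \ (e ∩ Y) := fun e he => by
    ext x
    simp only [mem_sdiff, mem_inter]
    exact ⟨fun h => ⟨h.1, fun hx => h.2 (he (mem_inter.mpr ⟨h.1, hx.2⟩))⟩,
      fun h => ⟨h.1, fun hx => h.2 ⟨h.1, hXY hx⟩⟩⟩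
  have hdisj : ∀ e : Finset V, Disjoint e (Y \ X) ↔ e ∩ Y ⊆ X := fun e => by
    simp only [disjoint_left, subset_iff, mem_inter, mem_sdiff, not_and_not_right, and_imp]
  constructor
  · rintro ⟨e, he, hdis, rfl, hne⟩
    have heY := (hdisj e).mp hdis
    refine ⟨e ∩ Y, heY, e, he, rfl, fun h => hne ?_, hsdiff e heY⟩
    exact sdiff_eq_empty_iff_subset.mpr fun x hx => heY (mem_inter.mpr ⟨hx, h hx⟩)
  · rintro ⟨A, hAX, hw⟩
    obtain ⟨e, he, rfl, hnot, rfl⟩ := id hw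
    exact ⟨e, he, (hdisj e).mpr hAX, (hsdiff e hAX).symm,
      (nonempty_of_mem_link hw).ne_empty⟩

/-- A largest member of `G_Y(X)` lies in the link of a trace that is minimal, since smaller
traces have larger link members. -/
lemma IsSaturated.exists_matching_residualHypergraph (hE : ∀ e ∈ E, e.card = r)
    (hsat : IsSaturated E m Y) (hXY : X ⊆ Y) (hw₀ : w₀ ∈ residualHypergraph E Y X)
    (hmax : ∀ w ∈ residualHypergraph E Y X, w.card ≤ w₀.card) :
    ∃ M : Finset (Finset V), m ≤ M.card ∧
      (∀ w ∈ M, w ∈ residualHypergraph E Y X ∧ w.card = w₀.card) ∧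
      (∀ a ∈ M, ∀ b ∈ M, a ≠ b → Disjoint a b) := by
  obtain ⟨A, hAX, hw₀A⟩ := (mem_residualHypergraph_iff hXY).mp hw₀
  have hA : Minimal (IsTrace E Y) A := by
    refine ⟨?_, fun B ⟨e, he, heB, hnot⟩ hBA => ?_⟩
    · obtain ⟨e, he, heA, hnot, -⟩ := hw₀A
      exact ⟨e, he, heA, hnot⟩
    · have hf : e \ B ∈ link E Y B := ⟨e, he, heB, hnot, rfl⟩
      have hle := hmax _ ((mem_residualHypergraph_iff hXY).mpr ⟨B, hBA.trans hAX, hf⟩)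
      have := card_add_card_of_mem_link hE hf
      have := card_add_card_of_mem_link hE hw₀A
      exact (eq_of_subset_of_card_le hBA (by omega)).ge
  obtain ⟨M, hMcard, hMlink, hMdisj⟩ := hsat A hA
  refine ⟨M, hMcard.ge,
    fun w hw => ⟨(mem_residualHypergraph_iff hXY).mpr ⟨A, hAX, hMlink hw⟩, ?_⟩,
    fun a ha b hb hab => hMdisj ha hb hab⟩
  have := card_add_card_of_mem_link hE (hMlink hw)
  have := card_add_card_of_mem_link hE hw₀A
  omega

end Residual

theorem stmt_11 (r m : ℕ) :
    ∃ C : ℕ, ∀ (V : Type) [DecidableEq V] (E : Set (Finset V)),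
      (∀ e ∈ E, e.card = r) →
      ∃ Y : Finset V, Y.card ≤ C ∧
        (∀ X ⊆ Y, ∀ d : ℕ,
          (∃ w ∈ {w : Finset V | ∃ e ∈ E, Disjoint e (Y \ X) ∧ w = e \ X ∧ w ≠ ∅},
            w.card = d) →
          (∀ w ∈ {w : Finset V | ∃ e ∈ E, Disjoint e (Y \ X) ∧ w = e \ X ∧ w ≠ ∅},
            w.card ≤ d) →
          ∃ M : Finset (Finset V), m ≤ M.card ∧
            (∀ w ∈ M, (∃ e ∈ E, Disjoint e (Y \ X) ∧ w = e \ X ∧ w ≠ ∅) ∧ w.card = d) ∧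
            (∀ a ∈ M, ∀ b ∈ M, a ≠ b → Disjoint a b)) ∧
        (Y ≠ ∅ → ∀ e ∈ E, (e ∩ Y).Nonempty) := by
  obtain ⟨N, hN⟩ := exists_isSaturated_augmentSeq r m
  refine ⟨r * m * N, fun V _ E hE => ?_⟩
  obtain ⟨k, hkN, hsat⟩ := hN V E hE
  refine ⟨augmentSeq E r m k, (card_augmentSeq_le E r m k).trans (Nat.mul_le_mul_left _ hkN),
    ?_, inter_augmentSeq_nonempty⟩
  rintro X hXY d ⟨w₀, hw₀, rfl⟩ hmax
  exact hsat.exists_matching_residualHypergraph hE hXY hw₀ hmax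
end

section
/- Let $r \in \mathbb{N}$ and let $n \ge 3r$. Let $G$ be an $r$-uniform hypergraph on vertex set $[n]$ with $\beta\binom{n}{r} \le e(G) \le (1-\beta)\binom{n}{r}$ for some $\beta \in (0, 1/2]$. Then there exists $s \in \{1,\dots,r\}$ such that $Q_s(G) \ge c_r \beta n^{r+s}$ for some constant $c_r > 0$ depending only on $r$, where $Q_s(G) = \sum_{\vec x} \left|\sum_W (-1)^{|W \cap \{x_1(-1),\dots,x_s(-1)\}|} \widehat G(W)\right|$, with the outer sum over sequences $\vec x = (x_1(-1), x_1(1), \dots, x_s(-1), x_s(1))$ of $2s$ distinct vertices, and the inner sum over $r$-sets $W$ satisfying $|W \cap \{x_i(-1), x_i(1)\}| = 1$ for every $i \in [s]$. -/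
/-!
Write `n = |α|`, `M(x, V)` for `transversalSum r f x V` (the signed sum of `f` over the `r`-sets
`W ⊇ V` meeting each of the `s` pairs of `x` in one point) and `N(s, t)` for
`transversalMass r f s t` (the sum of `|M(x, V)|` over systems `x` of `s` disjoint pairs and
`t`-sets `V` avoiding them). Then `N(0, r) = ‖f‖₁`, `N(0, 0) = |∑ f|` and `N(s, 0) = Q_s(f)`.

Adjoining a pair `(a, b)` to `x` and counting, for each `W`, the admissible `a` gives
`(n - 2s - t) M(x, V ∪ {b}) = ∑ₐ M(x + (a, b), V) + (r - s - t) M(x, V)`,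
so `N(s, t + 1) ≤ (3 / n) N(s + 1, t) + r N(s, t)` once `n ≥ 3r`. Iterating from `N(0, r)` yields
the Bollobás–Scott inequality `‖f‖₁ ≤ (r + 1)^r ∑_{j ≤ r} (3 / n)^j N(j, 0)`. For the centred
indicator `f = 1_G - p` the term `j = 0` vanishes, `‖f‖₁ = 2p(1 - p) C(n, r) ≥ β C(n, r)`, and
`Q_s(f) = Q_s(G)` for `s ≥ 1` because swapping the two points of a pair is a sign-reversing
involution on transversals.
-/

open Finset
open scoped Classical

namespace Finset

variable {α β : Type*} [DecidableEq α] [AddCommMonoid β]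

lemma sum_powersetCard_sum_sdiff (u : Finset α) (t : ℕ) (G : Finset α → α → β) :
    ∑ V ∈ u.powersetCard t, ∑ b ∈ u \ V, G V b =
      ∑ b ∈ u, ∑ V ∈ (u.erase b).powersetCard t, G V b :=
  sum_comm' fun V b => by simp only [mem_powersetCard, mem_sdiff, subset_erase]; tauto

lemma sum_powersetCard_succ_sum_erase (u : Finset α) (t : ℕ) (F : Finset α → α → β) :
    ∑ V ∈ u.powersetCard (t + 1), ∑ b ∈ V, F (V.erase b) b =
      ∑ V ∈ u.powersetCard t, ∑ b ∈ u \ V, F V b := by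
  rw [sum_sigma', sum_sigma']
  refine sum_nbij' (fun p => ⟨p.1.erase p.2, p.2⟩) (fun p => ⟨insert p.2 p.1, p.2⟩)
    ?_ ?_ ?_ ?_ fun _ _ => rfl
  · rintro ⟨V, b⟩ h
    simp only [mem_sigma, mem_powersetCard] at h ⊢
    exact ⟨⟨(erase_subset _ _).trans h.1.1, by rw [card_erase_of_mem h.2, h.1.2]; rfl⟩,
      mem_sdiff.2 ⟨h.1.1 h.2, notMem_erase _ _⟩⟩
  · rintro ⟨V, b⟩ h
    simp only [mem_sigma, mem_powersetCard, mem_sdiff] at h ⊢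
    exact ⟨⟨insert_subset h.2.1 h.1.1, by rw [card_insert_of_notMem h.2.2, h.1.2]⟩,
      mem_insert_self _ _⟩
  · rintro ⟨V, b⟩ h
    simp only [mem_sigma] at h
    simp [insert_erase h.2]
  · rintro ⟨V, b⟩ h
    simp only [mem_sigma, mem_sdiff] at h
    simp [erase_insert h.2.2]

lemma card_filter_eq_or_eq_eq_one_iff {a b : α} (hab : a ≠ b) (W : Finset α) :
    #{w ∈ W | w = a ∨ w = b} = 1 ↔ Xor (a ∈ W) (b ∈ W) := by
  rw [filter_or, filter_eq', filter_eq']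
  by_cases ha : a ∈ W <;> by_cases hb : b ∈ W <;> simp [ha, hb, card_pair hab]

end Finset

lemma mul_card_le_sum_abs_indicator_sub {ι : Type*} [DecidableEq ι] {P E : Finset ι}
    (hE : E ⊆ P) {β : ℝ} (hlow : β * #P ≤ #E) (hup : #E ≤ (1 - β) * #P) :
    β * #P ≤ ∑ W ∈ P, |(if W ∈ E then 1 else 0) - (#E / #P : ℝ)| := by
  rcases P.eq_empty_or_nonempty with rfl | hP
  · simp
  set p : ℝ := #E / #P
  have hP0 : (0 : ℝ) < #P := by exact_mod_cast hP.card_pos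
  have hEP : (#E : ℝ) ≤ #P := by exact_mod_cast card_le_card hE
  have hp0 : 0 ≤ p := by positivity
  have hp1 : p ≤ 1 := div_le_one_of_le₀ hEP hP0.le
  have hsum : ∑ W ∈ P, |(if W ∈ E then 1 else 0) - p| = #E * (1 - p) + (#P - #E) * p := by
    rw [sum_congr rfl fun W _ => show |(if W ∈ E then 1 else 0) - p| =
        if W ∈ E then 1 - p else p by split_ifs <;> simp [abs_of_nonneg, abs_of_nonpos, *],
      sum_ite, sum_const, sum_const, nsmul_eq_mul, nsmul_eq_mul]
    have hin : {W ∈ P | W ∈ E} = E := by rw [filter_mem_eq_inter, inter_eq_right.2 hE]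
    have hout : (#{W ∈ P | W ∉ E} : ℝ) = #P - #E := by
      have h := card_filter_add_card_filter_not (s := P) (· ∈ E)
      rw [hin] at h
      rw [eq_sub_iff_add_eq, add_comm]
      exact_mod_cast h
    rw [hout, hin]
  rw [hsum]
  have hmul : p * #P = #E := div_mul_cancel₀ _ hP0.ne'
  nlinarith [mul_nonneg (sub_nonneg.2 hlow) (sub_nonneg.2 hup)]

lemma sum_indicator_sub_card_div_eq_zero {ι : Type*} [DecidableEq ι] {P E : Finset ι}
    (hE : E ⊆ P) (hP : P.Nonempty) :
    ∑ W ∈ P, ((if W ∈ E then 1 else 0) - (#E / #P : ℝ)) = 0 := by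
  have hP0 : (#P : ℝ) ≠ 0 := by exact_mod_cast hP.card_pos.ne'
  simp only [sum_sub_distrib, sum_boole, filter_mem_eq_inter, inter_eq_right.2 hE, sum_const,
    nsmul_eq_mul, mul_div_cancel₀ _ hP0, sub_self]

lemma pow_div_factorial_le_choose {n r : ℕ} (h : 3 * r ≤ n) :
    (2 / 3 * n : ℝ) ^ r / r.factorial ≤ n.choose r := by
  refine le_trans ?_ (Nat.pow_le_choose r n)
  gcongr
  rw [Nat.cast_sub (by omega)]
  have : (3 * r : ℝ) ≤ n := by exact_mod_cast h
  push_cast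
  linarith

namespace PairTransversal

variable {α : Type*} {s : ℕ}

def IsTransversal (x : Fin s × Bool → α) (W : Finset α) : Prop :=
  ∀ i, Xor (x (i, false) ∈ W) (x (i, true) ∈ W)

def consPair (a b : α) (x : Fin s × Bool → α) : Fin (s + 1) × Bool → α :=
  fun p => Fin.cases (if p.2 then b else a) (fun i => x (i, p.2)) p.1

def pairTail (y : Fin (s + 1) × Bool → α) : Fin s × Bool → α :=
  fun p => y (p.1.succ, p.2)

section consPair

variable (a b : α) (x : Fin s × Bool → α)

@[simp] lemma consPair_zero_false : consPair a b x (0, false) = a := rfl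

@[simp] lemma consPair_zero_true : consPair a b x (0, true) = b := rfl

@[simp] lemma consPair_succ (i : Fin s) (c : Bool) : consPair a b x (i.succ, c) = x (i, c) := rfl

@[simp] lemma consPair_pairTail (y : Fin (s + 1) × Bool → α) :
    consPair (y (0, false)) (y (0, true)) (pairTail y) = y := by
  funext ⟨i, c⟩
  cases i using Fin.cases <;> cases c <;> rfl

lemma isTransversal_consPair (W : Finset α) :
    IsTransversal (consPair a b x) W ↔ Xor (a ∈ W) (b ∈ W) ∧ IsTransversal x W :=
  Fin.forall_fin_succ

lemma injective_consPair_iff :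
    (consPair a b x).Injective ↔
      x.Injective ∧ (∀ q, x q ≠ a) ∧ (∀ q, x q ≠ b) ∧ a ≠ b := by
  constructor
  · intro h
    refine ⟨fun p q hpq => ?_, fun q hq => ?_, fun q hq => ?_, fun hab => ?_⟩
    · simpa [Prod.ext_iff] using h (a₁ := (p.1.succ, p.2)) (a₂ := (q.1.succ, q.2)) hpq
    · simpa using h (a₁ := (q.1.succ, q.2)) (a₂ := (0, false)) hq
    · simpa using h (a₁ := (q.1.succ, q.2)) (a₂ := (0, true)) hq
    · simpa using h (a₁ := (0, false)) (a₂ := (0, true)) hab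
  · rintro ⟨hx, ha, hb, hab⟩ ⟨i, c⟩ ⟨j, d⟩ h
    cases i using Fin.cases <;> cases j using Fin.cases <;> cases c <;> cases d <;>
      simp_all [hx.eq_iff, eq_comm]

end consPair

variable [DecidableEq α]

def lowerCount (x : Fin s × Bool → α) (W : Finset α) : ℕ :=
  #{i | x (i, false) ∈ W}

lemma lowerCount_consPair (a b : α) (x : Fin s × Bool → α) (W : Finset α) :
    lowerCount (consPair a b x) W = lowerCount x W + if a ∈ W then 1 else 0 := by
  rw [lowerCount, Fin.card_filter_univ_succ]
  change (if a ∈ W then lowerCount x W + 1 else lowerCount x W) = _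
  split_ifs <;> rfl

noncomputable def transversalSign (x : Fin s × Bool → α) (W : Finset α) : ℝ :=
  if IsTransversal x W then (-1) ^ lowerCount x W else 0

lemma sum_erase_transversalSign_consPair (U : Finset α) (b : α) (x : Fin s × Bool → α)
    (W : Finset α) :
    ∑ a ∈ U.erase b, transversalSign (consPair a b x) W =
      (if b ∈ W then (#(U \ W) : ℝ) else -#(U ∩ W)) * transversalSign x W := by
  by_cases hT : IsTransversal x W
  swap
  · simp [transversalSign, isTransversal_consPair, hT]
  have hterm : ∀ a, transversalSign (consPair a b x) W =
      if Xor (a ∈ W) (b ∈ W) then (if a ∈ W then -1 else 1) * transversalSign x W else 0 := by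
    intro a
    by_cases ha : a ∈ W <;>
      simp [transversalSign, isTransversal_consPair, lowerCount_consPair, hT, ha, pow_succ]
  simp only [hterm]
  by_cases hbW : b ∈ W
  · have hdiff : (U.erase b) \ W = U \ W := by
      ext a; simp only [mem_sdiff, mem_erase]
      exact ⟨fun h => ⟨h.1.2, h.2⟩,
        fun h => ⟨⟨fun hab => h.2 (hab ▸ hbW), h.1⟩, h.2⟩⟩
    calc _ = ∑ a ∈ (U.erase b) \ W, transversalSign x W := by
          rw [sdiff_eq_filter, sum_filter]
          refine sum_congr rfl fun a _ => ?_
          by_cases ha : a ∈ W <;> simp [ha, hbW]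
      _ = _ := by rw [sum_const, nsmul_eq_mul, hdiff, if_pos hbW]
  · have hinter : (U.erase b) ∩ W = U ∩ W := by
      ext a; simp only [mem_inter, mem_erase]
      exact ⟨fun h => ⟨h.1.2, h.2⟩,
        fun h => ⟨⟨fun hab => hbW (hab ▸ h.2), h.1⟩, h.2⟩⟩
    calc _ = ∑ a ∈ (U.erase b) ∩ W, -transversalSign x W := by
          rw [← sum_ite_mem]
          refine sum_congr rfl fun a _ => ?_
          by_cases ha : a ∈ W <;> simp [ha, hbW]
      _ = _ := by rw [sum_const, nsmul_eq_mul, hinter, if_neg hbW]; ring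

lemma card_inter_image_of_isTransversal {x : Fin s × Bool → α} (hx : x.Injective)
    {W : Finset α} (hW : IsTransversal x W) : #(W ∩ univ.image x) = s := by
  have : W ∩ univ.image x = (univ.filter fun q => x q ∈ W).map ⟨x, hx⟩ := by
    ext w; simp [eq_comm]; aesop
  rw [this, card_map, card_filter, Fintype.sum_prod_type]
  simp only [Fintype.sum_bool]
  calc _ = ∑ _ : Fin s, 1 := by
        refine sum_congr rfl fun i _ => ?_
        rcases hW i with ⟨h1, h2⟩ | ⟨h1, h2⟩ <;> simp [h1, h2]
    _ = s := by simp

variable [Fintype α]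

lemma card_sdiff_inter_add_of_isTransversal {x : Fin s × Bool → α} (hx : x.Injective)
    {V W : Finset α} (hV : V ⊆ (univ.image x)ᶜ) (hT : IsTransversal x W) (hVW : V ⊆ W) :
    #(((univ.image x)ᶜ \ V) ∩ W) + s + #V = #W := by
  have hWX := card_inter_add_card_sdiff W (univ.image x)
  have hVWX : V ⊆ W \ univ.image x := fun v hv =>
    mem_sdiff.2 ⟨hVW hv, mem_compl.1 (hV hv)⟩
  have hsplit := card_sdiff_add_card_eq_card hVWX
  have : (W \ univ.image x) \ V = ((univ.image x)ᶜ \ V) ∩ W := by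
    ext w; simp only [mem_sdiff, mem_inter, mem_compl]; tauto
  rw [this] at hsplit
  rw [card_inter_image_of_isTransversal hx hT] at hWX
  omega

lemma compl_image_consPair (a b : α) (x : Fin s × Bool → α) :
    (univ.image (consPair a b x))ᶜ = ((univ.image x)ᶜ.erase b).erase a := by
  ext z
  simp [Prod.exists, Fin.exists_fin_succ, Bool.exists_bool, eq_comm]
  tauto

lemma sum_injective_consPair {β : Type*} [AddCommMonoid β]
    (H : (Fin (s + 1) × Bool → α) → β) :
    ∑ y : Fin (s + 1) × Bool → α with y.Injective, H y =
      ∑ x : Fin s × Bool → α with x.Injective,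
        ∑ b ∈ (univ.image x)ᶜ, ∑ a ∈ (univ.image x)ᶜ.erase b, H (consPair a b x) := by
  symm
  rw [sum_sigma', sum_sigma']
  refine sum_nbij' (fun p => consPair p.2 p.1.2 p.1.1)
    (fun y => ⟨⟨pairTail y, y (0, true)⟩, y (0, false)⟩) ?_ ?_ ?_ ?_ fun _ _ => rfl
  · rintro ⟨⟨x, b⟩, a⟩ h
    simp only [mem_sigma, mem_filter, mem_univ, true_and, mem_compl, mem_image, mem_erase,
      not_exists] at h ⊢
    exact (injective_consPair_iff a b x).2 ⟨h.1.1, h.2.2, h.1.2, h.2.1⟩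
  · intro y h
    simp only [mem_filter, mem_univ, true_and] at h
    rw [← consPair_pairTail y, injective_consPair_iff] at h
    simp only [mem_sigma, mem_filter, mem_univ, true_and, mem_compl, mem_image, mem_erase,
      not_exists]
    exact ⟨⟨h.1, h.2.2.1⟩, h.2.2.2, h.2.1⟩
  · rintro ⟨⟨x, b⟩, a⟩ _
    rfl
  · intro y _
    exact consPair_pairTail y

noncomputable def transversalSum (r : ℕ) (f : Finset α → ℝ) (x : Fin s × Bool → α)
    (V : Finset α) : ℝ :=
  ∑ W ∈ univ.powersetCard r with V ⊆ W, transversalSign x W * f W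

noncomputable def transversalMass (r : ℕ) (f : Finset α → ℝ) (s t : ℕ) : ℝ :=
  ∑ x : Fin s × Bool → α with x.Injective,
    ∑ V ∈ (univ.image x)ᶜ.powersetCard t, |transversalSum r f x V|

lemma transversalMass_nonneg (r : ℕ) (f : Finset α → ℝ) (s t : ℕ) :
    0 ≤ transversalMass r f s t :=
  sum_nonneg fun _ _ => sum_nonneg fun _ _ => abs_nonneg _

variable (r : ℕ) (f : Finset α → ℝ)

lemma card_mul_transversalSum_insert {x : Fin s × Bool → α} (hx : x.Injective) {V : Finset α}
    (hV : V ⊆ (univ.image x)ᶜ) (b : α) :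
    #((univ.image x)ᶜ \ V) * transversalSum r f x (insert b V) =
      ∑ a ∈ ((univ.image x)ᶜ \ V).erase b, transversalSum r f (consPair a b x) V +
        ((r : ℝ) - s - #V) * transversalSum r f x V := by
  set U := (univ.image x)ᶜ \ V
  simp only [transversalSum, sum_filter]
  rw [sum_comm, mul_sum, mul_sum, ← sum_add_distrib]
  refine sum_congr rfl fun W hW => ?_
  by_cases hVW : V ⊆ W
  swap
  · simp [hVW, insert_subset_iff]
  simp only [hVW, insert_subset_iff, and_true, if_true, ← sum_mul,
    sum_erase_transversalSign_consPair]
  by_cases hT : IsTransversal x W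
  swap
  · simp [transversalSign, hT]
  have hk := card_sdiff_inter_add_of_isTransversal hx hV hT hVW
  rw [(mem_powersetCard.1 hW).2] at hk
  have hk' : (#(U ∩ W) : ℝ) + s + #V = r := by exact_mod_cast hk
  have hU : (#(U ∩ W) : ℝ) + #(U \ W) = #U := by exact_mod_cast card_inter_add_card_sdiff U W
  split_ifs
  · linear_combination (-(transversalSign x W * f W)) * hU + transversalSign x W * f W * hk'
  · linear_combination transversalSign x W * f W * hk'

lemma card_compl_image_sdiff_add {x : Fin s × Bool → α} (hx : x.Injective) {V : Finset α}
    (hV : V ⊆ (univ.image x)ᶜ) :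
    #((univ.image x)ᶜ \ V) + 2 * s + #V = Fintype.card α := by
  have h1 := card_sdiff_add_card_eq_card hV
  have h2 := card_compl_add_card (univ.image x)
  rw [card_image_of_injective _ hx, card_univ, Fintype.card_prod, Fintype.card_fin,
    Fintype.card_bool] at h2
  omega

lemma card_sub_mul_abs_transversalSum_insert_le {x : Fin s × Bool → α} (hx : x.Injective)
    {V : Finset α} (hV : V ⊆ (univ.image x)ᶜ) (hsV : s + #V ≤ r) (b : α) :
    ((Fintype.card α : ℝ) - 2 * s - #V) * |transversalSum r f x (insert b V)| ≤
      ∑ a ∈ ((univ.image x)ᶜ \ V).erase b, |transversalSum r f (consPair a b x) V| +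
        ((r : ℝ) - s - #V) * |transversalSum r f x V| := by
  have hcard : (#((univ.image x)ᶜ \ V) : ℝ) = Fintype.card α - 2 * s - #V := by
    rw [← card_compl_image_sdiff_add hx hV]; push_cast; ring
  have hrsV : (0 : ℝ) ≤ r - s - #V := by
    have : ((s + #V : ℕ) : ℝ) ≤ r := by exact_mod_cast hsV
    push_cast at this; linarith
  rw [← hcard, ← abs_of_nonneg (Nat.cast_nonneg (α := ℝ) _), ← abs_mul,
    card_mul_transversalSum_insert r f hx hV]
  refine (abs_add_le _ _).trans ?_
  rw [abs_mul, abs_of_nonneg hrsV]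
  gcongr
  exact abs_sum_le_sum_abs _ _

lemma transversalMass_succ_left (t : ℕ) :
    transversalMass r f (s + 1) t =
      ∑ x : Fin s × Bool → α with x.Injective, ∑ V ∈ (univ.image x)ᶜ.powersetCard t,
        ∑ b ∈ (univ.image x)ᶜ \ V, ∑ a ∈ ((univ.image x)ᶜ \ V).erase b,
          |transversalSum r f (consPair a b x) V| := by
  rw [transversalMass, sum_injective_consPair]
  refine sum_congr rfl fun x _ => ?_
  rw [sum_powersetCard_sum_sdiff]
  refine sum_congr rfl fun b _ => ?_
  simp only [← erase_sdiff_comm, sum_powersetCard_sum_sdiff, compl_image_consPair]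

lemma mul_sum_abs_transversalSum_succ_le {x : Fin s × Bool → α} (hx : x.Injective) {t : ℕ}
    (hst : s + t ≤ r) :
    (t + 1) * ((Fintype.card α : ℝ) - 2 * s - t) *
        ∑ V ∈ (univ.image x)ᶜ.powersetCard (t + 1), |transversalSum r f x V| ≤
      ∑ V ∈ (univ.image x)ᶜ.powersetCard t, ∑ b ∈ (univ.image x)ᶜ \ V,
          ∑ a ∈ ((univ.image x)ᶜ \ V).erase b, |transversalSum r f (consPair a b x) V| +
        ((r : ℝ) - s - t) * ((Fintype.card α : ℝ) - 2 * s - t) *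
          ∑ V ∈ (univ.image x)ᶜ.powersetCard t, |transversalSum r f x V| := by
  set u := (univ.image x)ᶜ
  have hcard : ∀ V ∈ u.powersetCard t, (#(u \ V) : ℝ) = Fintype.card α - 2 * s - t := by
    intro V hV
    rw [mem_powersetCard] at hV
    rw [← hV.2, ← card_compl_image_sdiff_add hx hV.1]
    push_cast; ring
  have hdouble : (t + 1 : ℝ) * ∑ V ∈ u.powersetCard (t + 1), |transversalSum r f x V| =
      ∑ V ∈ u.powersetCard t, ∑ b ∈ u \ V, |transversalSum r f x (insert b V)| := by
    rw [← sum_powersetCard_succ_sum_erase, mul_sum]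
    refine sum_congr rfl fun V hV => ?_
    rw [sum_congr rfl fun b hb => by rw [insert_erase hb], sum_const, (mem_powersetCard.1 hV).2,
      nsmul_eq_mul]
    push_cast; ring
  calc (t + 1) * ((Fintype.card α : ℝ) - 2 * s - t) *
        ∑ V ∈ u.powersetCard (t + 1), |transversalSum r f x V|
      = ∑ V ∈ u.powersetCard t, ∑ b ∈ u \ V,
          ((Fintype.card α : ℝ) - 2 * s - #V) * |transversalSum r f x (insert b V)| := by
        rw [mul_right_comm, hdouble, sum_mul]
        refine sum_congr rfl fun V hV => ?_
        rw [sum_mul, (mem_powersetCard.1 hV).2]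
        exact sum_congr rfl fun _ _ => mul_comm _ _
    _ ≤ ∑ V ∈ u.powersetCard t, ∑ b ∈ u \ V,
          (∑ a ∈ (u \ V).erase b, |transversalSum r f (consPair a b x) V| +
            ((r : ℝ) - s - #V) * |transversalSum r f x V|) := by
        refine sum_le_sum fun V hV => sum_le_sum fun b _ => ?_
        rw [mem_powersetCard] at hV
        exact card_sub_mul_abs_transversalSum_insert_le r f hx hV.1 (hV.2 ▸ hst) b
    _ = _ := by
        simp only [sum_add_distrib, mul_sum]
        congr 1
        refine sum_congr rfl fun V hV => ?_
        rw [sum_const, nsmul_eq_mul, hcard V hV, (mem_powersetCard.1 hV).2]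
        ring

lemma mul_transversalMass_succ_right_le {t : ℕ} (hst : s + t ≤ r) :
    (t + 1) * ((Fintype.card α : ℝ) - 2 * s - t) * transversalMass r f s (t + 1) ≤
      transversalMass r f (s + 1) t +
        ((r : ℝ) - s - t) * ((Fintype.card α : ℝ) - 2 * s - t) * transversalMass r f s t := by
  rw [transversalMass_succ_left, transversalMass, transversalMass, mul_sum, mul_sum,
    ← sum_add_distrib]
  exact sum_le_sum fun x hx => mul_sum_abs_transversalSum_succ_le r f (mem_filter.1 hx).2 hst

lemma transversalMass_succ_right_le {t : ℕ} (hst : s + t + 1 ≤ r)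
    (hn : 3 * r ≤ Fintype.card α) :
    transversalMass r f s (t + 1) ≤
      3 / Fintype.card α * transversalMass r f (s + 1) t + r * transversalMass r f s t := by
  set n : ℝ := (Fintype.card α : ℝ)
  set m : ℝ := n - 2 * s - t
  have hn' : (3 * r : ℝ) ≤ n := by simp only [n]; exact_mod_cast hn
  have hst' : (s + t + 1 : ℝ) ≤ r := by exact_mod_cast hst
  have hn0 : 0 < n := by
    linarith [(s.cast_nonneg : (0 : ℝ) ≤ s), (t.cast_nonneg : (0 : ℝ) ≤ t)]
  have hm : n ≤ 3 * m := by linarith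
  have hm0 : 0 < (t + 1) * m := mul_pos (by positivity) (by linarith)
  have hN' := transversalMass_nonneg r f (s + 1) t
  have hN0 := transversalMass_nonneg r f s t
  have h1 : transversalMass r f (s + 1) t ≤
      (t + 1) * m * (3 / n * transversalMass r f (s + 1) t) := by
    have : 1 ≤ (t + 1) * m * (3 / n) := by
      rw [mul_div_assoc', le_div_iff₀ hn0]; nlinarith
    nlinarith
  have h2 : ((r : ℝ) - s - t) * m * transversalMass r f s t ≤
      (t + 1) * m * (r * transversalMass r f s t) := by
    have : ((r : ℝ) - s - t) ≤ (t + 1) * r := by nlinarith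
    nlinarith [mul_le_mul_of_nonneg_right this (mul_nonneg (by linarith : (0 : ℝ) ≤ m) hN0)]
  refine le_of_mul_le_mul_left ?_ hm0
  linarith [mul_transversalMass_succ_right_le r f (s := s) (t := t) (by omega)]

lemma transversalMass_le_sum (hn : 3 * r ≤ Fintype.card α) {t : ℕ} (hst : s + t ≤ r) :
    transversalMass r f s t ≤ (r + 1) ^ t *
      ∑ j ∈ range (t + 1), (3 / Fintype.card α : ℝ) ^ j * transversalMass r f (s + j) 0 := by
  set ε : ℝ := 3 / Fintype.card α
  set q : ℕ → ℝ := fun k => transversalMass r f k 0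
  have hterm : ∀ j k, 0 ≤ ε ^ j * q k := fun j k =>
    mul_nonneg (pow_nonneg (by positivity) _) (transversalMass_nonneg r f k 0)
  induction t generalizing s with
  | zero => simp
  | succ t ih =>
    set S := ∑ j ∈ range (t + 2), ε ^ j * q (s + j)
    have hshift : ε * ∑ j ∈ range (t + 1), ε ^ j * q (s + 1 + j) ≤ S := by
      rw [show S = _ from sum_range_succ' _ _, mul_sum]
      refine le_add_of_le_of_nonneg (le_of_eq (sum_congr rfl fun j _ => ?_)) (hterm 0 _)
      rw [show s + 1 + j = s + (j + 1) by omega, pow_succ]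
      ring
    have hmono : ∑ j ∈ range (t + 1), ε ^ j * q (s + j) ≤ S := by
      rw [show S = _ from sum_range_succ _ (t + 1)]
      exact le_add_of_nonneg_right (hterm _ _)
    calc transversalMass r f s (t + 1)
        ≤ ε * transversalMass r f (s + 1) t + r * transversalMass r f s t :=
          transversalMass_succ_right_le r f (by omega) hn
      _ ≤ ε * ((r + 1) ^ t * ∑ j ∈ range (t + 1), ε ^ j * q (s + 1 + j)) +
            r * ((r + 1) ^ t * ∑ j ∈ range (t + 1), ε ^ j * q (s + j)) := by
          gcongr
          exacts [ih (by omega), ih (by omega)]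
      _ ≤ (r + 1) ^ t * S + r * ((r + 1) ^ t * S) := by
          rw [mul_left_comm]
          gcongr
      _ = (r + 1) ^ (t + 1) * S := by ring

lemma transversalMass_zero_left (t : ℕ) :
    transversalMass r f 0 t =
      ∑ V ∈ univ.powersetCard t, |∑ W ∈ univ.powersetCard r with V ⊆ W, f W| := by
  have hinj : ∀ x : Fin 0 × Bool → α, x.Injective :=
    fun _ => Function.injective_of_subsingleton _
  simp [transversalMass, transversalSum, transversalSign, hinj, IsTransversal, lowerCount]

lemma transversalMass_zero_zero :
    transversalMass r f 0 0 = |∑ W ∈ univ.powersetCard r, f W| := by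
  simp [transversalMass_zero_left]

lemma transversalMass_zero_self :
    transversalMass r f 0 r = ∑ V ∈ univ.powersetCard r, |f V| := by
  rw [transversalMass_zero_left]
  refine sum_congr rfl fun V hV => ?_
  have : {W ∈ (univ : Finset α).powersetCard r | V ⊆ W} = {V} := by
    ext W
    simp only [mem_filter, mem_powersetCard, mem_singleton] at hV ⊢
    exact ⟨fun h => (eq_of_subset_of_card_le h.2 (by omega)).symm,
      fun h => ⟨h ▸ hV, h ▸ subset_rfl⟩⟩
  rw [this, sum_singleton]

lemma transversalMass_zero_right :
    transversalMass r f s 0 =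
      ∑ x : Fin s × Bool → α with x.Injective, |transversalSum r f x ∅| := by
  simp [transversalMass]

lemma sum_transversalSign_eq_zero {x : Fin (s + 1) × Bool → α} (hx : x.Injective) :
    ∑ W ∈ univ.powersetCard r, transversalSign x W = 0 := by
  simp only [transversalSign]
  rw [← sum_filter]
  set e := Equiv.swap (x (0, false)) (x (0, true))
  have hfix : ∀ (i : Fin s) c, e (x (i.succ, c)) = x (i.succ, c) := fun i c =>
    Equiv.swap_apply_of_ne_of_ne (hx.ne (by simp)) (hx.ne (by simp))
  have hmem : ∀ (W : Finset α) z, z ∈ W.map e.toEmbedding ↔ e z ∈ W := by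
    simp [mem_map_equiv, e, Equiv.symm_swap]
  have htrans : ∀ W : Finset α, IsTransversal x (W.map e.toEmbedding) ↔ IsTransversal x W := by
    intro W
    simp only [IsTransversal, Fin.forall_fin_succ, hmem, hfix, e, Equiv.swap_apply_left,
      Equiv.swap_apply_right, xor_comm]
  have hsign : ∀ W : Finset α, IsTransversal x W →
      (-1 : ℝ) ^ lowerCount x W = -(-1) ^ lowerCount x (W.map e.toEmbedding) := by
    intro W hW
    simp only [lowerCount, Fin.card_filter_univ_succ, hmem, hfix, e, Equiv.swap_apply_left]
    rcases hW 0 with ⟨h1, h2⟩ | ⟨h1, h2⟩ <;> simp [h1, h2, pow_succ]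
  have hinv : ∀ W : Finset α, (W.map e.toEmbedding).map e.toEmbedding = W := fun W => by
    ext z; simp only [hmem, Equiv.swap_apply_self, e]
  have key := sum_nbij' (s := {W ∈ univ.powersetCard r | IsTransversal x W})
    (t := {W ∈ univ.powersetCard r | IsTransversal x W})
    (f := fun W => (-1 : ℝ) ^ lowerCount x W) (g := fun W => -(-1 : ℝ) ^ lowerCount x W)
    (fun W => W.map e.toEmbedding) (fun W => W.map e.toEmbedding)
    (fun W hW => by simp_all) (fun W hW => by simp_all)
    (fun W _ => hinv W) (fun W _ => hinv W) (fun W hW => hsign W (mem_filter.1 hW).2)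
  rw [sum_neg_distrib] at key
  linarith

lemma transversalSum_sub_const {x : Fin (s + 1) × Bool → α} (hx : x.Injective) (c : ℝ) :
    transversalSum r (fun W => f W - c) x ∅ = transversalSum r f x ∅ := by
  simp only [transversalSum, empty_subset, filter_true, mul_sub, sum_sub_distrib, ← sum_mul,
    sum_transversalSign_eq_zero r hx, zero_mul, sub_zero]

lemma sum_abs_le_sum_transversalMass (hn : 3 * r ≤ Fintype.card α) :
    ∑ V ∈ univ.powersetCard r, |f V| ≤ (r + 1) ^ r *
      ∑ j ∈ range (r + 1), (3 / Fintype.card α : ℝ) ^ j * transversalMass r f j 0 := by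
  simpa [transversalMass_zero_self] using
    transversalMass_le_sum r f hn (s := 0) (t := r) (zero_add r).le

lemma exists_sum_abs_mul_pow_le_transversalMass (hr : 0 < r) (hn : 3 * r ≤ Fintype.card α)
    (hf : ∑ W ∈ univ.powersetCard r, f W = 0) :
    ∃ s, 1 ≤ s ∧ s ≤ r ∧ (∑ V ∈ univ.powersetCard r, |f V|) * Fintype.card α ^ s ≤
      r * (r + 1) ^ r * 3 ^ r * transversalMass r f s 0 := by
  set n : ℝ := (Fintype.card α : ℝ)
  have hn0 : 0 < n := by simp only [n]; exact_mod_cast (show 0 < Fintype.card α by omega)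
  have hr0 : (0 : ℝ) < r := by exact_mod_cast hr
  have hbound := sum_abs_le_sum_transversalMass r f hn
  rw [sum_range_succ', pow_zero, one_mul, transversalMass_zero_zero, hf, abs_zero,
    add_zero, mul_sum] at hbound
  obtain ⟨j, hj, hle⟩ := exists_le_of_sum_le (nonempty_range_iff.2 hr.ne')
    (f := fun _ => (∑ V ∈ univ.powersetCard r, |f V|) / r)
    (g := fun j => (r + 1) ^ r * ((3 / n) ^ (j + 1) * transversalMass r f (j + 1) 0))
    (by rwa [sum_const, card_range, nsmul_eq_mul, mul_div_cancel₀ _ hr0.ne'])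
  refine ⟨j + 1, by omega, mem_range.1 hj, ?_⟩
  rw [div_le_iff₀ hr0] at hle
  have h3 : (3 : ℝ) ^ (j + 1) ≤ 3 ^ r := pow_le_pow_right₀ (by norm_num) (mem_range.1 hj)
  have hN := transversalMass_nonneg r f (j + 1) 0
  calc (∑ V ∈ univ.powersetCard r, |f V|) * n ^ (j + 1)
      ≤ (r + 1) ^ r * ((3 / n) ^ (j + 1) * transversalMass r f (j + 1) 0) * r * n ^ (j + 1) := by
        gcongr
    _ = r * (r + 1) ^ r * 3 ^ (j + 1) * transversalMass r f (j + 1) 0 := by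
        rw [div_pow]
        field_simp
    _ ≤ r * (r + 1) ^ r * 3 ^ r * transversalMass r f (j + 1) 0 := by gcongr

lemma transversalSum_empty_eq {x : Fin s × Bool → α} (hx : x.Injective) :
    transversalSum r f x ∅ = ∑ W ∈ (univ.powersetCard r).filter (fun W =>
        ∀ i : Fin s, (W.filter (fun w => w = x (i, false) ∨ w = x (i, true))).card = 1),
      (-1 : ℝ) ^ (W.filter (fun w => ∃ i : Fin s, w = x (i, false))).card * f W := by
  simp only [transversalSum, empty_subset, filter_true, transversalSign, ite_mul, zero_mul,
    ← sum_filter]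
  refine sum_congr (filter_congr fun W _ => forall_congr' fun i => ?_) fun W _ => ?_
  · exact (card_filter_eq_or_eq_eq_one_iff (hx.ne (by simp)) W).symm
  · have hinj : (fun i : Fin s => x (i, false)).Injective := fun i j h => by
      simpa using hx h
    have : W.filter (fun w => ∃ i : Fin s, w = x (i, false)) =
        (univ.filter fun i : Fin s => x (i, false) ∈ W).map ⟨_, hinj⟩ := by
      ext w; simp only [mem_filter, mem_map, mem_univ, true_and, Function.Embedding.coeFn_mk]
      constructor
      · rintro ⟨hw, i, rfl⟩; exact ⟨i, hw, rfl⟩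
      · rintro ⟨i, hi, rfl⟩; exact ⟨hi, i, rfl⟩
    rw [this, card_map, lowerCount]

lemma transversalMass_sub_const_succ_zero (c : ℝ) :
    transversalMass r (fun W => f W - c) (s + 1) 0 =
      ∑ x ∈ (univ : Finset (Fin (s + 1) × Bool → α)).filter Function.Injective,
        |∑ W ∈ (univ.powersetCard r).filter (fun W => ∀ i : Fin (s + 1),
            (W.filter (fun w => w = x (i, false) ∨ w = x (i, true))).card = 1),
          (-1 : ℝ) ^ (W.filter (fun w => ∃ i : Fin (s + 1), w = x (i, false))).card * f W| := by
  rw [transversalMass_zero_right]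
  refine sum_congr rfl fun x hx => ?_
  replace hx := (mem_filter.1 hx).2
  rw [transversalSum_sub_const r f hx, transversalSum_empty_eq r f hx]

end PairTransversal

open PairTransversal in
theorem stmt_12 (r : ℕ) (hr : 0 < r) :
    ∃ c : ℝ, 0 < c ∧ ∀ n : ℕ, 3 * r ≤ n → ∀ β : ℝ, 0 < β → β ≤ 1 / 2 →
      ∀ E : Finset (Finset (Fin n)), (∀ e ∈ E, e.card = r) →
        β * (n.choose r : ℝ) ≤ (E.card : ℝ) → (E.card : ℝ) ≤ (1 - β) * (n.choose r : ℝ) →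
        ∃ s : ℕ, 1 ≤ s ∧ s ≤ r ∧
          c * β * (n : ℝ) ^ (r + s) ≤
          ∑ x ∈ (Finset.univ : Finset (Fin s × Bool → Fin n)).filter Function.Injective,
            |∑ W ∈ ((Finset.univ : Finset (Fin n)).powersetCard r).filter (fun W =>
                ∀ i : Fin s, (W.filter (fun w => w = x (i, false) ∨ w = x (i, true))).card = 1),
              (-1 : ℝ) ^ (W.filter (fun w => ∃ i : Fin s, w = x (i, false))).card *
                (if W ∈ E then (1 : ℝ) else 0)| := by
  set K : ℝ := r * (r + 1) ^ r * 3 ^ r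
  refine ⟨(2 / 3) ^ r / (r.factorial * K), by positivity, ?_⟩
  intro n hn β hβ _ E hE hlow hup
  set P := (univ : Finset (Fin n)).powersetCard r
  have hP : #P = n.choose r := by simp [P]
  have hEP : E ⊆ P := fun e he => mem_powersetCard.2 ⟨subset_univ e, hE e he⟩
  rw [← hP] at hlow hup
  have hL1 := mul_card_le_sum_abs_indicator_sub hEP hlow hup
  have hC := hP ▸ pow_div_factorial_le_choose hn
  have hPne : P.Nonempty := card_pos.1 (hP ▸ Nat.choose_pos (by omega))
  obtain ⟨s, hs1, hsr, hle⟩ := exists_sum_abs_mul_pow_le_transversalMass r _ hr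
    (by simpa using hn) (sum_indicator_sub_card_div_eq_zero hEP hPne)
  refine ⟨s, hs1, hsr, ?_⟩
  obtain ⟨s, rfl⟩ : ∃ k, s = k + 1 := ⟨s - 1, by omega⟩
  rw [Fintype.card_fin, transversalMass_sub_const_succ_zero] at hle
  calc (2 / 3) ^ r / (r.factorial * K) * β * (n : ℝ) ^ (r + (s + 1))
      = β * ((2 / 3 * n) ^ r / r.factorial) * n ^ (s + 1) / K := by
        rw [mul_pow, pow_add]; field_simp
    _ ≤ β * #P * n ^ (s + 1) / K := by gcongr
    _ ≤ (∑ W ∈ P, |(if W ∈ E then 1 else 0) - (#E / #P : ℝ)|) * n ^ (s + 1) / K := by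
        gcongr
    _ ≤ _ := by rw [div_le_iff₀ (by positivity)]; linarith
end

section
/- Let $d \ge 1$ and let $\mathrm{LO}_f(m)$ denote, for each $f \le d$, the supremum over all $\ell \in \mathbb{R}$, all $k$, and all multilinear polynomials $P \in \mathbb{R}[x_1,\dots,x_k]$ of degree at most $f$ whose hypergraph of nonzero degree-$f$ coefficients has a matching of size at least $m$, of $\Pr[P(\xi_1,\dots,\xi_k) = \ell]$, where $\xi_1,\dots,\xi_k$ are i.i.d. Rademacher. Consider a multilinear polynomial $P \in \mathbb{R}[x_1,\dots,x_k]$ of degree at most $d$, and for each $f \in \{0,\dots,d\}$ let $b_f$ bound the absolute values of all degree-$f$ coefficients of $P$. Suppose that for some $f \in \{0,\dots,d\}$ and $t \in \mathbb{N}$, the $f$-uniform hypergraph on $[k]$ whose edges are the $f$-sets $I$ with $|\widehat P(I)| > t b_{f+1} + t^2 b_{f+2} + \dots + t^{d-f} b_d$ has a matching of size at least $t$. Then $\sup_{\ell \in \mathbb{R}} \Pr[P(\xi_1,\dots,\xi_k) = \ell] \le C_d \sup_{f \le d} \mathrm{LO}_f(c_d t)$ for constants $C_d, c_d > 0$ depending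 only on $d$. -/
/-!
Induction on `d`. If the nonzero degree-`d` coefficients contain a matching of size `c_d t`, the
bound is `LO_d` itself. Otherwise fix the variables `V` covered by a maximal such matching `N`, so
`|V| ≤ d |N| < t / 2`. By maximality every restriction has degree `< d`; at most `|V|` edges of `M`
meet `V`; and, by the binomial theorem, the surviving edges still beat the threshold for
`t - |V| ≥ t / 2` with respect to the bounds `b'_g = ∑_j C(|V|, j) b_{g+j}`. As `Pr[P = ℓ]` is the
average of the restricted probabilities, the induction hypothesis applied to one restriction
concludes.
-/

open Finset
open scoped Classical

/-- The probability that a multilinear polynomial with coefficients `c`, evaluated at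
i.i.d. Rademacher random variables, equals `ℓ`. -/
noncomputable def radProb (k : ℕ) (c : Finset (Fin k) → ℝ) (ℓ : ℝ) : ℝ :=
  (((Finset.univ : Finset (Fin k → Bool)).filter (fun x =>
      (∑ S : Finset (Fin k), c S * ∏ i ∈ S, (if x i then (1 : ℝ) else -1)) = ℓ)).card : ℝ) /
    (2 : ℝ) ^ k

/-- `LO f m`: the supremum of `Pr[P(ξ₁,…,ξ_k) = ℓ]` over all `ℓ ∈ ℝ`, all `k ∈ ℕ` and all
multilinear polynomials `P` of degree at most `f` whose `f`-uniform hypergraph of nonzero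
degree-`f` coefficients has a matching of size at least `m`. -/
noncomputable def LO (f m : ℕ) : ℝ :=
  sSup {p : ℝ | ∃ (k : ℕ) (c : Finset (Fin k) → ℝ) (ℓ : ℝ),
    (∀ S : Finset (Fin k), f < S.card → c S = 0) ∧
    (∃ M : Finset (Finset (Fin k)), m ≤ M.card ∧ (∀ I ∈ M, I.card = f ∧ c I ≠ 0) ∧
      ∀ a ∈ M, ∀ b ∈ M, a ≠ b → Disjoint a b) ∧
    p = radProb k c ℓ}

lemma radProb_nonneg (k : ℕ) (c : Finset (Fin k) → ℝ) (ℓ : ℝ) : 0 ≤ radProb k c ℓ := by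
  unfold radProb; positivity

lemma radProb_le_one (k : ℕ) (c : Finset (Fin k) → ℝ) (ℓ : ℝ) : radProb k c ℓ ≤ 1 := by
  unfold radProb
  rw [div_le_one (by positivity)]
  exact_mod_cast (card_filter_le _ _).trans_eq (by simp)

lemma radProb_le_LO {f m k : ℕ} {c : Finset (Fin k) → ℝ}
    (hdeg : ∀ S : Finset (Fin k), f < S.card → c S = 0) {M : Finset (Finset (Fin k))}
    (hm : m ≤ M.card) (hM : ∀ I ∈ M, I.card = f ∧ c I ≠ 0)
    (hdisj : (M : Set (Finset (Fin k))).PairwiseDisjoint id) (ℓ : ℝ) :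
    radProb k c ℓ ≤ LO f m :=
  le_csSup ⟨1, by rintro p ⟨k, c, ℓ, -, -, rfl⟩; exact radProb_le_one k c ℓ⟩
    ⟨k, c, ℓ, hdeg, ⟨M, hm, hM, fun _ ha _ hb => hdisj ha hb⟩, rfl⟩

lemma LO_nonneg (f m : ℕ) : 0 ≤ LO f m :=
  Real.sSup_nonneg <| by rintro p ⟨k, c, ℓ, -, -, rfl⟩; exact radProb_nonneg k c ℓ

lemma LO_antitone (f : ℕ) : Antitone (LO f) := fun _ _ h =>
  Real.sSup_le (by
    rintro p ⟨k, c, ℓ, hdeg, ⟨M, hm, hM, hdisj⟩, rfl⟩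
    exact radProb_le_LO hdeg (h.trans hm) hM (fun _ ha _ hb => hdisj _ ha _ hb) ℓ)
    (LO_nonneg f _)

/-- A nonzero constant polynomial is a degree-`0` polynomial with a matching `{∅}` of size `1`. -/
lemma one_le_LO_zero {m : ℕ} (hm : m ≤ 1) : 1 ≤ LO 0 m := by
  have h := radProb_le_LO (f := 0) (m := m) (k := 0) (c := fun _ => 1) (M := {∅})
    (fun S hS => by simp [Finset.eq_empty_of_isEmpty S] at hS)
    (by simpa using hm) (by simp) (by simp) 1
  simpa [radProb, Subsingleton.elim (default : Finset (Fin 0)) ∅] using h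

/-- `c_d = 4⁻ᵈ`, so that `2 (d + 1) c_{d+1} ≤ 1` and `c_{d+1} ≤ c_d / 2`. -/
noncomputable def matchingConst (d : ℕ) : ℝ := (4 ^ d)⁻¹

lemma matchingConst_pos (d : ℕ) : 0 < matchingConst d := by
  unfold matchingConst; positivity

lemma ceil_matchingConst_mul_le (d t : ℕ) : ⌈matchingConst d * t⌉₊ ≤ t := by
  refine Nat.ceil_le.2 (mul_le_of_le_one_left (Nat.cast_nonneg t) ?_)
  exact inv_le_one_of_one_le₀ (one_le_pow₀ (by norm_num))

lemma lt_of_one_lt_ceil_matchingConst {d t : ℕ} (h : 1 < ⌈matchingConst d * t⌉₊) :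
    d + 1 < t := by
  have h1 : (1 : ℝ) < (4 ^ d)⁻¹ * t := by simpa [matchingConst] using Nat.lt_ceil.1 h
  rw [inv_mul_eq_div, one_lt_div (by positivity)] at h1
  have h2 : 4 ^ d < t := by exact_mod_cast h1
  have h3 : d < 4 ^ d := Nat.lt_pow_self (by norm_num)
  omega

lemma two_mul_lt_of_lt_matchingConst {n s t : ℕ} (h : (s : ℝ) < matchingConst (n + 1) * t) :
    2 * ((n + 1) * s) < t := by
  have h4 : (2 * (n + 1) : ℝ) ≤ 4 ^ (n + 1) := by
    have := one_add_mul_le_pow (a := (3 : ℝ)) (by norm_num) (n + 1)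
    norm_num at this ⊢; linarith
  rw [matchingConst, inv_mul_eq_div, lt_div_iff₀ (by positivity)] at h
  have : (2 * ((n + 1) * s) : ℝ) < t := by nlinarith [(Nat.cast_nonneg s : (0 : ℝ) ≤ s)]
  exact_mod_cast this

lemma ceil_matchingConst_succ_le {n t v : ℕ} (h : 2 * v ≤ t) :
    ⌈matchingConst (n + 1) * t⌉₊ ≤ ⌈matchingConst n * ↑(t - v)⌉₊ := by
  refine Nat.ceil_mono ?_
  have ht : (2 * v : ℝ) ≤ t := by exact_mod_cast h
  rw [Nat.cast_sub (by omega), matchingConst, matchingConst, pow_succ, mul_inv]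
  have := matchingConst_pos n
  rw [matchingConst] at this
  nlinarith

/-- The bound `|c'_I| ≤ ∑_{J ⊆ V} b_{|I| + |J|}` on the coefficients after fixing `v = |V|`
variables. -/
noncomputable def restrictBound (β : ℕ → ℝ) (v g : ℕ) : ℝ :=
  ∑ j ∈ range (v + 1), (v.choose j : ℝ) * β (g + j)

lemma restrictBound_nonneg {β : ℕ → ℝ} (hβ : ∀ g, 0 ≤ β g) (v g : ℕ) :
    0 ≤ restrictBound β v g :=
  sum_nonneg fun _ _ => mul_nonneg (Nat.cast_nonneg _) (hβ _)

lemma sum_powerset_eq_restrictBound {α : Type*} (V : Finset α) (β : ℕ → ℝ) (g : ℕ) :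
    ∑ J ∈ V.powerset, β (g + J.card) = restrictBound β V.card g := by
  rw [sum_powerset_apply_card (fun j => β (g + j))]
  simp [restrictBound, nsmul_eq_mul]

/-- Regrouping by `c = a + j`, the left side is dominated termwise by the binomial expansion of
`(x + v) ^ c`, because `v.choose j ≤ v ^ j`. -/
lemma sum_range_pow_mul_restrictBound_le {γ : ℕ → ℝ} (hγ : ∀ c, 0 ≤ γ c) {N : ℕ}
    (hγN : ∀ c, N ≤ c → γ c = 0) {x : ℝ} (hx : 0 ≤ x) (v : ℕ) :
    ∑ a ∈ range N, x ^ a * restrictBound γ v a ≤ ∑ c ∈ range N, (x + v) ^ c * γ c := by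
  have hfiber : ∀ c, ∑ p ∈ range N ×ˢ range (v + 1) with p.1 + p.2 = c,
      x ^ p.1 * (v.choose p.2 : ℝ) * γ (p.1 + p.2) ≤ (x + v) ^ c * γ c := by
    intro c
    have hγc := hγ c
    calc ∑ p ∈ range N ×ˢ range (v + 1) with p.1 + p.2 = c,
          x ^ p.1 * (v.choose p.2 : ℝ) * γ (p.1 + p.2)
        ≤ ∑ p ∈ range N ×ˢ range (v + 1) with p.1 + p.2 = c,
          x ^ p.1 * (v : ℝ) ^ p.2 * (c.choose p.1 : ℝ) * γ c := by
          refine sum_le_sum fun p hp => ?_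
          have hpc : p.1 + p.2 = c := (mem_filter.1 hp).2
          have hv : (v.choose p.2 : ℝ) ≤ (v : ℝ) ^ p.2 := by exact_mod_cast Nat.choose_le_pow _ _
          have hc : (1 : ℝ) ≤ c.choose p.1 := by exact_mod_cast Nat.choose_pos (by omega)
          rw [hpc]
          calc x ^ p.1 * (v.choose p.2 : ℝ) * γ c ≤ x ^ p.1 * (v : ℝ) ^ p.2 * 1 * γ c := by
                rw [mul_one]; gcongr
            _ ≤ _ := by gcongr
      _ ≤ ∑ p ∈ antidiagonal c, x ^ p.1 * (v : ℝ) ^ p.2 * (c.choose p.1 : ℝ) * γ c :=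
          sum_le_sum_of_subset_of_nonneg (fun p hp => by simpa using (mem_filter.1 hp).2)
            fun _ _ _ => by positivity
      _ = (x + v) ^ c * γ c := by
          rw [← sum_mul, add_pow, Nat.sum_antidiagonal_eq_sum_range_succ
            (fun a b => x ^ a * (v : ℝ) ^ b * (c.choose a : ℝ))]
  calc ∑ a ∈ range N, x ^ a * restrictBound γ v a
      = ∑ p ∈ range N ×ˢ range (v + 1), x ^ p.1 * (v.choose p.2 : ℝ) * γ (p.1 + p.2) := by
        simp only [sum_product, restrictBound, mul_sum, mul_assoc]
    _ ≤ ∑ c ∈ range N, ∑ p ∈ range N ×ˢ range (v + 1) with p.1 + p.2 = c,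
          x ^ p.1 * (v.choose p.2 : ℝ) * γ (p.1 + p.2) :=
        sum_le_sum_fiberwise_of_sum_fiber_nonpos fun c hc => (sum_eq_zero fun p hp => by
          rw [(mem_filter.1 hp).2, hγN c (by simpa using hc), mul_zero]).le
    _ ≤ ∑ c ∈ range N, (x + v) ^ c * γ c := sum_le_sum fun c _ => hfiber c

lemma sum_Icc_pow_mul_restrictBound_le {β : ℕ → ℝ} (hβ : ∀ g, 0 ≤ β g) {D : ℕ}
    (hβD : ∀ g, D < g → β g = 0) {x : ℝ} (hx : 0 ≤ x) (v f : ℕ) :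
    ∑ g ∈ Icc f D, x ^ (g - f) * restrictBound β v g
      ≤ ∑ g ∈ Icc f D, (x + v) ^ (g - f) * β g := by
  simp only [← Ico_add_one_right_eq_Icc, sum_Ico_eq_sum_range, Nat.add_sub_cancel_left]
  have hshift : ∀ a, restrictBound β v (f + a) = restrictBound (fun c => β (f + c)) v a := by
    simp [restrictBound, add_assoc]
  simp only [hshift]
  exact sum_range_pow_mul_restrictBound_le (fun _ => hβ _) (fun _ _ => hβD _ (by omega)) hx v

section Restriction

variable {k : ℕ}

def walsh (x : Fin k → Bool) (S : Finset (Fin k)) : ℝ := ∏ i ∈ S, if x i then 1 else -1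

lemma abs_walsh (x : Fin k → Bool) (S : Finset (Fin k)) : |walsh x S| = 1 := by
  rw [walsh, abs_prod]
  exact prod_eq_one fun i _ => by split_ifs <;> simp

def evalPoly (c : Finset (Fin k) → ℝ) (x : Fin k → Bool) : ℝ := ∑ S, c S * walsh x S

lemma radProb_eq_card (c : Finset (Fin k) → ℝ) (ℓ : ℝ) :
    radProb k c ℓ = #{x | evalPoly c x = ℓ} / 2 ^ k := rfl

/-- The coefficients of `P` after the variables in `V` are fixed to the values `y`. -/
noncomputable def restrictPoly (c : Finset (Fin k) → ℝ) (V : Finset (Fin k)) (y : Fin k → Bool)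
    (I : Finset (Fin k)) : ℝ :=
  if Disjoint I V then ∑ J ∈ V.powerset, c (I ∪ J) * walsh y J else 0

lemma evalPoly_restrictPoly (c : Finset (Fin k) → ℝ) (V : Finset (Fin k)) (x y : Fin k → Bool) :
    evalPoly (restrictPoly c V y) x = evalPoly c (V.piecewise y x) := by
  have hwalsh : ∀ I J, Disjoint I V → J ⊆ V →
      walsh (V.piecewise y x) (I ∪ J) = walsh y J * walsh x I := by
    intro I J hI hJ
    rw [walsh, prod_union (hI.mono_right hJ), mul_comm]
    congr 1 <;> refine prod_congr rfl fun i hi => ?_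
    · rw [piecewise_eq_of_mem _ _ _ (hJ hi)]
    · rw [piecewise_eq_of_notMem _ _ _ (disjoint_left.1 hI hi)]
  calc evalPoly (restrictPoly c V y) x
      = ∑ I with Disjoint I V, ∑ J ∈ V.powerset, c (I ∪ J) * walsh y J * walsh x I := by
        simp only [evalPoly, restrictPoly, ite_mul, zero_mul, sum_ite, sum_const_zero, add_zero,
          sum_mul]
    _ = ∑ p ∈ ({I | Disjoint I V} : Finset _) ×ˢ V.powerset,
          c (p.1 ∪ p.2) * walsh (V.piecewise y x) (p.1 ∪ p.2) := by
        rw [sum_product]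
        refine sum_congr rfl fun I hI => sum_congr rfl fun J hJ => ?_
        rw [hwalsh I J (mem_filter.1 hI).2 (mem_powerset.1 hJ), mul_assoc]
    _ = evalPoly c (V.piecewise y x) := by
        refine sum_nbij' (fun p => p.1 ∪ p.2) (fun S => (S \ V, S ∩ V)) (by simp)
          (fun S _ => by simp [sdiff_disjoint, inter_subset_right]) (fun p hp => ?_)
          (fun S _ => sdiff_union_inter S V) (fun _ _ => rfl)
        obtain ⟨hI, hJ⟩ := mem_product.1 hp
        have hI : Disjoint p.1 V := (mem_filter.1 hI).2
        have hJ : p.2 ⊆ V := mem_powerset.1 hJ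
        ext1
        · rw [union_sdiff_distrib, sdiff_eq_self_of_disjoint hI, sdiff_eq_empty_iff_subset.2 hJ,
            union_empty]
        · rw [union_inter_distrib_right, disjoint_iff_inter_eq_empty.1 hI,
            inter_eq_left.2 hJ, empty_union]

lemma sum_card_piecewise (P : (Fin k → Bool) → Prop) (V : Finset (Fin k)) :
    ∑ y, #{x | P (V.piecewise y x)} = 2 ^ k * #{z | P z} := by
  let swap : Equiv.Perm ((Fin k → Bool) × (Fin k → Bool)) :=
    Function.Involutive.toPerm (fun p => (V.piecewise p.1 p.2, V.piecewise p.2 p.1)) fun p => by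
      ext i <;> by_cases hi : i ∈ V <;> simp [hi]
  simp only [card_filter]
  calc ∑ y, ∑ x, (if P (V.piecewise y x) then 1 else 0)
      = ∑ p, (if P (swap p).1 then 1 else 0) := (Fintype.sum_prod_type' _).symm
    _ = ∑ p : (Fin k → Bool) × (Fin k → Bool), (if P p.1 then 1 else 0) :=
        Equiv.sum_comp swap fun p => if P p.1 then 1 else 0
    _ = 2 ^ k * ∑ z, (if P z then 1 else 0) := by
        rw [Fintype.sum_prod_type, mul_sum]
        refine sum_congr rfl fun z _ => ?_
        by_cases hz : P z <;> simp [hz]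

/-- `Pr[P = ℓ]` is the average over `y` of the restricted probabilities. -/
lemma exists_radProb_le_restrictPoly (c : Finset (Fin k) → ℝ) (V : Finset (Fin k)) (ℓ : ℝ) :
    ∃ y, radProb k c ℓ ≤ radProb k (restrictPoly c V y) ℓ := by
  have hsum : ∑ y, radProb k (restrictPoly c V y) ℓ = 2 ^ k * radProb k c ℓ := by
    simp only [radProb_eq_card, evalPoly_restrictPoly, ← sum_div]
    rw [← Nat.cast_sum, sum_card_piecewise (fun z => evalPoly c z = ℓ)]
    push_cast
    ring
  obtain ⟨y, -, hy⟩ := exists_le_of_sum_le (s := univ) (f := fun _ => radProb k c ℓ)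
    (g := fun y => radProb k (restrictPoly c V y) ℓ) univ_nonempty (by simp [hsum])
  exact ⟨y, hy⟩

variable {c : Finset (Fin k) → ℝ} {V : Finset (Fin k)}

lemma restrictPoly_eq_zero_of_lt_card {n : ℕ}
    (hdeg : ∀ S : Finset (Fin k), n + 1 < S.card → c S = 0)
    (hV : ∀ S : Finset (Fin k), S.card = n + 1 → c S ≠ 0 → ¬ Disjoint S V) (y : Fin k → Bool)
    {S : Finset (Fin k)} (hS : n < S.card) : restrictPoly c V y S = 0 := by
  unfold restrictPoly
  split_ifs with hSV
  · refine sum_eq_zero fun J hJ => ?_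
    have hcard := card_union_of_disjoint (hSV.mono_right (mem_powerset.1 hJ))
    by_contra hne
    have hle : (S ∪ J).card ≤ n + 1 := by
      by_contra! hlt
      exact hne (by rw [hdeg _ hlt, zero_mul])
    obtain rfl : J = ∅ := card_eq_zero.1 (by omega)
    rw [union_empty] at hne hle
    exact hV S (by omega) (left_ne_zero_of_mul hne) hSV
  · rfl

variable {β : ℕ → ℝ}

lemma abs_mul_walsh_le (hcβ : ∀ S : Finset (Fin k), |c S| ≤ β S.card) {I J : Finset (Fin k)}
    (hIV : Disjoint I V) (hJ : J ∈ V.powerset) (y : Fin k → Bool) :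
    |c (I ∪ J) * walsh y J| ≤ β (I.card + J.card) := by
  rw [abs_mul, abs_walsh, mul_one, ← card_union_of_disjoint (hIV.mono_right (mem_powerset.1 hJ))]
  exact hcβ _

lemma abs_restrictPoly_le (hβ : ∀ g, 0 ≤ β g) (hcβ : ∀ S : Finset (Fin k), |c S| ≤ β S.card)
    (y : Fin k → Bool) (S : Finset (Fin k)) :
    |restrictPoly c V y S| ≤ restrictBound β V.card S.card := by
  unfold restrictPoly
  split_ifs with hSV
  · rw [← sum_powerset_eq_restrictBound]
    exact (abs_sum_le_sum_abs _ _).trans (sum_le_sum fun J hJ => abs_mul_walsh_le hcβ hSV hJ y)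
  · rw [abs_zero]
    exact restrictBound_nonneg hβ _ _

lemma abs_restrictPoly_sub_le (hcβ : ∀ S : Finset (Fin k), |c S| ≤ β S.card)
    {I : Finset (Fin k)} (hIV : Disjoint I V) (y : Fin k → Bool) :
    |restrictPoly c V y I - c I| ≤ restrictBound β V.card I.card - β I.card := by
  have hempty := empty_mem_powerset V
  have hcoeff : (∑ J ∈ V.powerset, c (I ∪ J) * walsh y J) - c I
      = ∑ J ∈ V.powerset.erase ∅, c (I ∪ J) * walsh y J := by
    rw [sum_erase_eq_sub hempty]
    simp [walsh]
  have hbound : restrictBound β V.card I.card - β I.card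
      = ∑ J ∈ V.powerset.erase ∅, β (I.card + J.card) := by
    rw [sum_erase_eq_sub hempty, sum_powerset_eq_restrictBound]
    simp
  rw [restrictPoly, if_pos hIV, hcoeff, hbound]
  exact (abs_sum_le_sum_abs _ _).trans
    (sum_le_sum fun J hJ => abs_mul_walsh_le hcβ hIV (mem_of_mem_erase hJ) y)

/-- The loss `|restrictPoly c V y I - c I|` and the new threshold are together paid for by the old
threshold, by `sum_Icc_pow_mul_restrictBound_le`. -/
lemma sum_lt_abs_restrictPoly (hβ : ∀ g, 0 ≤ β g) {D : ℕ} (hβD : ∀ g, D < g → β g = 0)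
    (hcβ : ∀ S : Finset (Fin k), |c S| ≤ β S.card) {I : Finset (Fin k)} (hIV : Disjoint I V)
    (hID : I.card ≤ D) {x t : ℝ} (hx : 0 ≤ x) (hxt : x + V.card ≤ t)
    (hI : ∑ g ∈ Ioc I.card D, t ^ (g - I.card) * β g < |c I|) (y : Fin k → Bool) :
    ∑ g ∈ Ioc I.card D, x ^ (g - I.card) * restrictBound β V.card g
      < |restrictPoly c V y I| := by
  have hconv := sum_Icc_pow_mul_restrictBound_le hβ hβD hx V.card I.card
  rw [← add_sum_Ioc_eq_sum_Icc hID, ← add_sum_Ioc_eq_sum_Icc hID] at hconv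
  have hmono : ∑ g ∈ Ioc I.card D, (x + V.card) ^ (g - I.card) * β g
      ≤ ∑ g ∈ Ioc I.card D, t ^ (g - I.card) * β g :=
    sum_le_sum fun g _ => mul_le_mul_of_nonneg_right (pow_le_pow_left₀ (by positivity) hxt _) (hβ g)
  have hloss := (abs_sub_abs_le_abs_sub (c I) (restrictPoly c V y I)).trans
    ((abs_sub_comm _ _).le.trans (abs_restrictPoly_sub_le hcβ hIV y))
  simp only [Nat.sub_self, pow_zero, one_mul] at hconv
  linarith

lemma threshold_restrictPoly (hβ : ∀ g, 0 ≤ β g) {n : ℕ} (hβD : ∀ g, n + 1 < g → β g = 0)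
    (hcβ : ∀ S : Finset (Fin k), |c S| ≤ β S.card) {f t : ℕ} (hf : f ≤ n) (hVt : V.card ≤ t)
    {M : Finset (Finset (Fin k))}
    (hM : ∀ I ∈ M, I.card = f ∧ ∑ g ∈ Ioc f (n + 1), (t : ℝ) ^ (g - f) * β g < |c I|)
    (y : Fin k → Bool) :
    ∀ I ∈ {I ∈ M | Disjoint I V}, I.card = f ∧
      ∑ g ∈ Ioc f n, ((t - V.card : ℕ) : ℝ) ^ (g - f) * restrictBound β V.card g
        < |restrictPoly c V y I| := by
  intro I hI
  obtain ⟨hIM, hIV⟩ := mem_filter.1 hI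
  obtain ⟨rfl, hIt⟩ := hM I hIM
  refine ⟨rfl, (sum_le_sum_of_subset_of_nonneg (Ioc_subset_Ioc_right n.le_succ)
    fun g _ _ => mul_nonneg (by positivity) (restrictBound_nonneg hβ _ _)).trans_lt ?_⟩
  exact sum_lt_abs_restrictPoly hβ hβD hcβ hIV (by omega) (Nat.cast_nonneg _)
    (by rw [Nat.cast_sub hVt, sub_add_cancel]) hIt y

end Restriction

section Matching

variable {α : Type*}

lemma exists_maximal_matching (E : Finset (Finset α)) (hE : ∅ ∉ E) :
    ∃ N ⊆ E, (N : Set (Finset α)).PairwiseDisjoint id ∧ ∀ S ∈ E, ∃ I ∈ N, ¬ Disjoint S I := by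
  classical
  obtain ⟨N, hN, hmax⟩ := exists_max_image
    (E.powerset.filter fun N : Finset (Finset α) => (N : Set (Finset α)).PairwiseDisjoint id)
    card ⟨∅, by simp⟩
  obtain ⟨hNE, hNdisj⟩ := mem_filter.1 hN
  refine ⟨N, mem_powerset.1 hNE, hNdisj, fun S hS => ?_⟩
  by_contra! hfree
  have hSN : S ∉ N := fun h => hE (by rwa [← bot_eq_empty, ← disjoint_self.1 (hfree S h)])
  have hins := hmax (insert S N) <| mem_filter.2
    ⟨mem_powerset.2 (insert_subset hS (mem_powerset.1 hNE)),
      by rw [coe_insert]; exact hNdisj.insert fun I hI _ => hfree I hI⟩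
  rw [card_insert_of_notMem hSN] at hins
  omega

/-- The members of a disjoint family that meet `V` meet it in disjoint nonempty pieces. -/
lemma card_sub_card_le_card_filter_disjoint [DecidableEq α] {M : Finset (Finset α)}
    (hM : (M : Set (Finset α)).PairwiseDisjoint id) (V : Finset α) :
    M.card - V.card ≤ #{I ∈ M | Disjoint I V} := by
  have hmeet : #{I ∈ M | ¬ Disjoint I V} ≤ V.card := by
    refine (card_le_card_biUnion (f := (· ∩ V)) (fun I hI J hJ hIJ => ?_) fun I hI => ?_).trans
      (card_le_card (biUnion_subset.2 fun _ _ => inter_subset_right))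
    · exact (hM (mem_filter.1 hI).1 (mem_filter.1 hJ).1 hIJ).mono inter_subset_left
        inter_subset_left
    · exact not_disjoint_iff_nonempty_inter.1 (mem_filter.1 hI).2
  have := card_filter_add_card_filter_not (s := M) fun I => Disjoint I V
  omega

/-- At most one member of a disjoint family is empty. -/
lemma card_le_succ_of_pairwiseDisjoint [Fintype α] {M : Finset (Finset α)}
    (hM : (M : Set (Finset α)).PairwiseDisjoint id) : M.card ≤ Fintype.card α + 1 := by
  classical
  have herase : (M.erase ∅).card ≤ Fintype.card α :=
    (card_le_card_biUnion (f := id) (hM.subset (by simp))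
      fun I hI => nonempty_iff_ne_empty.2 (ne_of_mem_erase hI)).trans (card_le_univ _)
  have := pred_card_le_card_erase (s := M) (a := ∅)
  omega

end Matching

lemma nonneg_of_abs_le {k : ℕ} {c : Finset (Fin k) → ℝ} {b : ℕ → ℝ}
    (hb : ∀ S : Finset (Fin k), |c S| ≤ b S.card) {g : ℕ} (hg : g ≤ k) : 0 ≤ b g := by
  obtain ⟨S, -, hS⟩ := exists_subset_card_eq (s := (univ : Finset (Fin k))) (by simpa using hg)
  exact hS ▸ (abs_nonneg _).trans (hb S)

lemma radProb_le_LO_of_top {d k t : ℕ} {c : Finset (Fin k) → ℝ} {b : ℕ → ℝ}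
    (hdeg : ∀ S : Finset (Fin k), d < S.card → c S = 0) {M : Finset (Finset (Fin k))}
    (htM : t ≤ M.card)
    (hM : ∀ I ∈ M, I.card = d ∧ ∑ g ∈ Ioc d d, (t : ℝ) ^ (g - d) * b g < |c I|)
    (hdisj : (M : Set (Finset (Fin k))).PairwiseDisjoint id) (ℓ : ℝ) :
    radProb k c ℓ ≤ LO d ⌈matchingConst d * t⌉₊ :=
  radProb_le_LO hdeg ((ceil_matchingConst_mul_le d t).trans htM)
    (fun I hI => ⟨(hM I hI).1, by simpa using (hM I hI).2⟩) hdisj ℓ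

theorem exists_radProb_le_LO (d : ℕ) {k : ℕ} {c : Finset (Fin k) → ℝ} {b : ℕ → ℝ}
    (hdeg : ∀ S : Finset (Fin k), d < S.card → c S = 0)
    (hb : ∀ S : Finset (Fin k), |c S| ≤ b S.card) (hb0 : ∀ g ≤ d, 0 ≤ b g)
    {f t : ℕ} (hf : f ≤ d) {M : Finset (Finset (Fin k))} (htM : t ≤ M.card)
    (hM : ∀ I ∈ M, I.card = f ∧ ∑ g ∈ Ioc f d, (t : ℝ) ^ (g - f) * b g < |c I|)
    (hdisj : (M : Set (Finset (Fin k))).PairwiseDisjoint id) (ℓ : ℝ) :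
    ∃ f' ≤ d, radProb k c ℓ ≤ LO f' ⌈matchingConst d * t⌉₊ := by
  induction d generalizing k c b f t M with
  | zero =>
    obtain rfl := Nat.le_zero.1 hf
    exact ⟨0, le_rfl, radProb_le_LO_of_top hdeg htM hM hdisj ℓ⟩
  | succ n ih =>
    rcases hf.eq_or_lt with rfl | hf
    · exact ⟨_, le_rfl, radProb_le_LO_of_top hdeg htM hM hdisj ℓ⟩
    obtain ⟨N, hNE, hNdisj, hNmax⟩ :=
      exists_maximal_matching {S : Finset (Fin k) | S.card = n + 1 ∧ c S ≠ 0} (by simp)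
    have hN : ∀ I ∈ N, I.card = n + 1 ∧ c I ≠ 0 := fun I hI => (mem_filter.1 (hNE hI)).2
    by_cases hNt : ⌈matchingConst (n + 1) * t⌉₊ ≤ N.card
    · exact ⟨n + 1, le_rfl, radProb_le_LO hdeg hNt hN hNdisj ℓ⟩
    set V := N.biUnion id
    have hV : 2 * V.card < t := by
      have := card_biUnion_le_card_mul N id (n + 1) fun I hI => (hN I hI).1.le
      have := two_mul_lt_of_lt_matchingConst (Nat.lt_ceil.1 (not_le.1 hNt))
      nlinarith
    set β := (Set.Iic (n + 1)).indicator b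
    have hβb : ∀ g ≤ n + 1, β g = b g := fun g hg => Set.indicator_of_mem (Set.mem_Iic.2 hg) _
    have hβ : ∀ g, 0 ≤ β g := Set.indicator_nonneg fun g hg => hb0 g hg
    have hβD : ∀ g, n + 1 < g → β g = 0 := fun g hg => Set.indicator_of_notMem (by simpa) _
    have hcβ : ∀ S : Finset (Fin k), |c S| ≤ β S.card := fun S => by
      by_cases hS : S.card ≤ n + 1
      · simpa [β, hS] using hb S
      · simp [β, hS, hdeg S (not_le.1 hS)]
    obtain ⟨y, hy⟩ := exists_radProb_le_restrictPoly c V ℓ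
    obtain ⟨f', hf', hLO⟩ := ih (c := restrictPoly c V y) (b := restrictBound β V.card)
      (fun S => restrictPoly_eq_zero_of_lt_card hdeg (fun S hS hcS hSV => by
        obtain ⟨I, hI, hSI⟩ := hNmax S (by simp [hS, hcS])
        exact hSI ((disjoint_biUnion_right _ _ _).1 hSV I hI)) y)
      (abs_restrictPoly_le hβ hcβ y) (fun g _ => restrictBound_nonneg hβ _ _) (by omega)
      ((Nat.sub_le_sub_right htM _).trans (card_sub_card_le_card_filter_disjoint hdisj V))
      (threshold_restrictPoly hβ hβD hcβ (by omega) (by omega) (fun I hI => ⟨(hM I hI).1, by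
        rw [sum_congr rfl fun g hg => by rw [hβb g (mem_Ioc.1 hg).2]]; exact (hM I hI).2⟩) y)
      (hdisj.subset (coe_subset.2 (filter_subset _ _)))
    exact ⟨f', by omega, hy.trans (hLO.trans (LO_antitone _ (ceil_matchingConst_succ_le hV.le)))⟩

theorem stmt_15_general (d : ℕ) :
    ∃ (C cd : ℝ), 0 < cd ∧
      ∀ (k : ℕ) (cc : Finset (Fin k) → ℝ) (b : ℕ → ℝ),
        (∀ S : Finset (Fin k), d < S.card → cc S = 0) →
        (∀ S : Finset (Fin k), |cc S| ≤ b S.card) →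
        ∀ f ≤ d, ∀ t : ℕ,
          (∃ M : Finset (Finset (Fin k)), t ≤ M.card ∧
            (∀ I ∈ M, I.card = f ∧
              (∑ g ∈ Finset.Ioc f d, (t : ℝ) ^ (g - f) * b g) < |cc I|) ∧
            ∀ a ∈ M, ∀ b' ∈ M, a ≠ b' → Disjoint a b') →
          ∀ ℓ : ℝ, radProb k cc ℓ ≤ C * ⨆ f' : Fin (d + 1), LO f' ⌈cd * t⌉₊ := by
  refine ⟨1, matchingConst d, matchingConst_pos d,
    fun k c b hdeg hb f hf t ⟨M, htM, hM, hdisj⟩ ℓ => ?_⟩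
  have hdisj : (M : Set (Finset (Fin k))).PairwiseDisjoint id := fun _ hI _ hJ => hdisj _ hI _ hJ
  have hbdd := (Set.finite_range fun f' : Fin (d + 1) => LO f' ⌈matchingConst d * t⌉₊).bddAbove
  rw [one_mul]
  rcases le_or_gt ⌈matchingConst d * t⌉₊ 1 with hm | hm
  · exact (radProb_le_one k c ℓ).trans ((one_le_LO_zero hm).trans (le_ciSup hbdd 0))
  · -- `M` has more than `d + 1` disjoint members, so `d < k` and each `b g` with `g ≤ d`
    -- bounds some `|c S|`
    have hdk : d < k := by
      have hMk : M.card ≤ k + 1 := by simpa using card_le_succ_of_pairwiseDisjoint hdisj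
      have := lt_of_one_lt_ceil_matchingConst hm
      omega
    obtain ⟨f', hf', h⟩ := exists_radProb_le_LO d hdeg hb
      (fun g hg => nonneg_of_abs_le hb (hg.trans hdk.le)) hf htM hM hdisj ℓ
    exact h.trans (le_ciSup hbdd ⟨f', by omega⟩)

theorem stmt_15 (d : ℕ) (hd : 1 ≤ d) :
    ∃ (C cd : ℝ), 0 < cd ∧
      ∀ (k : ℕ) (cc : Finset (Fin k) → ℝ) (b : ℕ → ℝ),
        (∀ S : Finset (Fin k), d < S.card → cc S = 0) →
        (∀ S : Finset (Fin k), |cc S| ≤ b S.card) →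
        ∀ f ≤ d, ∀ t : ℕ,
          (∃ M : Finset (Finset (Fin k)), t ≤ M.card ∧
            (∀ I ∈ M, I.card = f ∧
              (∑ g ∈ Finset.Ioc f d, (t : ℝ) ^ (g - f) * b g) < |cc I|) ∧
            ∀ a ∈ M, ∀ b' ∈ M, a ≠ b' → Disjoint a b') →
          ∀ ℓ : ℝ, radProb k cc ℓ ≤ C * ⨆ f' : Fin (d + 1), LO f' ⌈cd * t⌉₊ :=
  stmt_15_general d
end
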